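/- arXiv:1502.01183 — 4 statements merged into one kernel-verified Lean document; each statement's English description precedes it below -/
import Mathlib

section
/- There is no n and no shifted simplicial complex Δ on [n] of dimension 3 whose h̃-triangle (h̃_{i,j})_{0≤j≤i≤4} has rows (1), (1,5), (1,4,7), (1,3,3,4), (1,2,0,0,0); that is, h̃_{0,0}=1, (h̃_{1,0},h̃_{1,1})=(1,5), (h̃_{2,0},h̃_{2,1},h̃_{2,2})=(1,4,7), (h̃_{3,0},…,h̃_{3,3})=(1,3,3,4), (h̃_{4,0},…,h̃_{4,4})=(1,2,0,0,0). -/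
open Finset

noncomputable section

/-- The largest `a` with `C(a,ℓ) ≤ p` (searched within a sufficient bound). -/
def largestBinom (ℓ p : ℕ) : ℕ :=
  Nat.findGreatest (fun a => Nat.choose a ℓ ≤ p) (p + ℓ)

/-- The Macaulay lower shadow `∂^ℓ(p)`, computed from the `ℓ`-representation
`p = C(a_ℓ,ℓ) + ⋯ + C(a_e,e)` via the greedy algorithm; `∂^ℓ(0) = 0`. -/
def mshadow : ℕ → ℕ → ℕ
  | 0, _ => 0
  | (ℓ+1), p =>
    if p = 0 then 0
    else Nat.choose (largestBinom (ℓ+1) p - 1) ℓ +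
      mshadow ℓ (p - Nat.choose (largestBinom (ℓ+1) p) (ℓ+1))

/-- `(f 0, f 1, …, f d)` is an M-sequence (of nonnegative integers):
`f 0 = 1` and `∂^ℓ(f ℓ) ≤ f (ℓ-1)` for `1 ≤ ℓ ≤ d`. -/
def IsMSeqI (f : ℕ → ℤ) (d : ℕ) : Prop :=
  f 0 = 1 ∧ (∀ ℓ ≤ d, 0 ≤ f ℓ) ∧
    ∀ ℓ, 1 ≤ ℓ → ℓ ≤ d → (mshadow ℓ (f ℓ).toNat : ℤ) ≤ f (ℓ - 1)

/-- A simplicial complex on `[n]`: a family of subsets closed under taking subsets. -/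
def IsCplx {n : ℕ} (Δ : Set (Finset (Fin n))) : Prop :=
  ∀ F ∈ Δ, ∀ G, G ⊆ F → G ∈ Δ

/-- A shifted family on `[n]`: replacing a smaller element by a larger one stays in the family. -/
def ShiftedCplx {n : ℕ} (Δ : Set (Finset (Fin n))) : Prop :=
  ∀ F ∈ Δ, ∀ r s : Fin n, r < s → r ∈ F → s ∉ F → insert s (F.erase r) ∈ Δ

/-- `F` is a facet (inclusion-maximal member) of `Δ`. -/
def IsFacet {n : ℕ} (Δ : Set (Finset (Fin n))) (F : Finset (Fin n)) : Prop :=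
  F ∈ Δ ∧ ∀ G ∈ Δ, F ⊆ G → F = G

/-- `fvec Δ i` is the number of faces of cardinality `i` (that is, `f_{i-1}`). -/
def fvec {n : ℕ} (Δ : Set (Finset (Fin n))) (i : ℕ) : ℕ :=
  {F ∈ Δ | F.card = i}.ncard

/-- The `h`-vector of a `(d-1)`-complex, defined by
`Σ h_j y^j = Σ f_{i-1} (1-y)^{d-i} y^i`, i.e. `h_j = Σ_{i≤j} (-1)^{j-i} C(d-i, j-i) f_{i-1}`. -/
def hvec {n : ℕ} (d : ℕ) (Δ : Set (Finset (Fin n))) (j : ℕ) : ℤ :=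
  ∑ i ∈ Finset.range (j + 1),
    (-1 : ℤ) ^ (j - i) * (Nat.choose (d - i) (j - i) : ℤ) * (fvec Δ i : ℤ)

/-- The pure skeleton of `Δ` whose facets are the faces of cardinality `c`
(the pure `(c-1)`-skeleton `Δ^[c-1]`). -/
def pureSkel {n : ℕ} (Δ : Set (Finset (Fin n))) (c : ℕ) : Set (Finset (Fin n)) :=
  {G | ∃ F ∈ Δ, F.card = c ∧ G ⊆ F}

/-- The `h̃`-triangle: `h̃_{i,j} = h_j(Δ^[i-1])`. -/
def htilde {n : ℕ} (Δ : Set (Finset (Fin n))) (i j : ℕ) : ℤ :=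
  hvec i (pureSkel Δ i) j

/-- The `h`-triangle: `h_{i,j} = h̃_{i,j} - Σ_{ℓ≤j} h̃_{i+1,ℓ}`. -/
def htri {n : ℕ} (Δ : Set (Finset (Fin n))) (i j : ℕ) : ℤ :=
  htilde Δ i j - ∑ ℓ ∈ Finset.range (j + 1), htilde Δ (i + 1) ℓ

/-- `σ(F)`: the longest terminal segment `{s, s+1, …, n}` contained in `F`
(empty if the last vertex is not in `F`). -/
def sigmaSeg {n : ℕ} (F : Finset (Fin n)) : Finset (Fin n) :=
  Finset.univ.filter (fun k => ∀ l, k ≤ l → l ∈ F)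

/-- The degree of a monomial, given by its exponent vector. -/
def degM {k : ℕ} (m : Fin k → ℕ) : ℕ := ∑ i, m i

/-- The monomial `m` only involves the first `r` variables `w_1, …, w_r`. -/
def SupportedOn {k : ℕ} (r : ℕ) (m : Fin k → ℕ) : Prop :=
  ∀ i : Fin k, r ≤ (i : ℕ) → m i = 0

/-- A multicomplex: a set of monomials closed under divisibility. -/
def IsMulticx {k : ℕ} (M : Set (Fin k → ℕ)) : Prop :=
  ∀ m ∈ M, ∀ m' : Fin k → ℕ, (∀ i, m' i ≤ m i) → m' ∈ M

/-- The monomial `w_j ⬝ (m / w_i)`. -/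
def shiftMove {k : ℕ} (m : Fin k → ℕ) (i j : Fin k) : Fin k → ℕ :=
  fun t => if t = i then m i - 1 else if t = j then m j + 1 else m t

/-- A shifted multicomplex (on the first `r` variables). -/
def ShiftedMC {k : ℕ} (r : ℕ) (M : Set (Fin k → ℕ)) : Prop :=
  ∀ m ∈ M, ∀ i j : Fin k, i < j → (j : ℕ) < r → 0 < m i → shiftMove m i j ∈ M

/-- Viewing `F` as the set of north-step positions of a lattice path, `xcoordS F p` is the
x-coordinate of the step at position `p`, i.e. the number of east steps strictly before `p`. -/
def xcoordS {k : ℕ} (F : Finset (Fin k)) (p : Fin k) : ℕ :=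
  (Finset.univ.filter (fun j => j < p ∧ j ∉ F)).card

/-- `ψ = λ ∘ ν⁻¹` : the monomial on `W_r` associated to an `a`-subset `F` of `[r+a]`;
the exponent of `w_{i+1}` is the number of north steps with x-coordinate `i`. -/
def psiM (r : ℕ) {k : ℕ} (F : Finset (Fin k)) : Fin k → ℕ :=
  fun i => if (i : ℕ) < r then (F.filter (fun p => xcoordS F p = (i : ℕ))).card else 0

/-- The partial sum `m_1 + ⋯ + m_i` of exponents strictly before position `i`. -/
def psum {k : ℕ} (m : Fin k → ℕ) (i : Fin k) : ℕ :=
  ∑ j ∈ Finset.univ.filter (fun j => j < i), m j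

/-- `φ = ν ∘ λ⁻¹` : the set of north-step positions of the lattice path associated to a
monomial `m` on the first `r` variables (the remaining north steps lie in the last column). -/
def phiM (r : ℕ) {k : ℕ} (m : Fin k → ℕ) : Finset (Fin k) :=
  Finset.univ.filter (fun p =>
    (∃ i : Fin k, (i : ℕ) < r ∧ psum m i + (i : ℕ) ≤ (p : ℕ) ∧
        (p : ℕ) < psum m i + m i + (i : ℕ)) ∨
    degM m + r ≤ (p : ℕ))

/-- The `a`-cone of `M` in the variable with (0-indexed) index `t`:
`{ w_{t+1}^ℓ · m : m ∈ M, deg m + ℓ < a }`. -/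
def coneMC {k : ℕ} (t a : ℕ) (M : Set (Fin k → ℕ)) : Set (Fin k → ℕ) :=
  {p | ∃ m ∈ M, ∃ ℓ : ℕ, degM m + ℓ < a ∧
    p = fun i : Fin k => if (i : ℕ) = t then m i + ℓ else m i}

/-- `Φ(M)`: the simplicial complex whose facets are the sets `φ(m)`, `m ∈ M`. -/
def PhiCplx (r : ℕ) {k : ℕ} (M : Set (Fin k → ℕ)) : Set (Finset (Fin k)) :=
  {G | ∃ m ∈ M, G ⊆ phiM r m}

/-- A `d`-metacomplex on `n`: a sequence of multicomplexes `M^[i]` on `{w_1,…,w_{n-i}}`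
of degree `≤ i` with `C^i M^[i] ⊆ M^[i-1]`. -/
def IsMeta (n d : ℕ) (M : ℕ → Set (Fin n → ℕ)) : Prop :=
  (∀ i ≤ d, IsMulticx (M i) ∧ ∀ m ∈ M i, SupportedOn (n - i) m ∧ degM m ≤ i) ∧
  (∀ i, 1 ≤ i → i ≤ d → coneMC (n - i) i (M i) ⊆ M (i - 1))

/-- A metacomplex is shifted if all its multicomplexes are. -/
def ShiftedMeta (n d : ℕ) (M : ℕ → Set (Fin n → ℕ)) : Prop :=
  ∀ i ≤ d, ShiftedMC (n - i) (M i)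

/-- The `f`-triangle of a metacomplex: `f_{i,j}` = number of degree-`j` monomials in `M^[i]`. -/
def ftri (n : ℕ) (M : ℕ → Set (Fin n → ℕ)) (i j : ℕ) : ℕ :=
  {m ∈ M i | degM m = j}.ncard

/-- `Φ̄(𝓜) = ⋃_{i≤d} {φ^i(m) : m ∈ M^[i]}`. -/
def PhiBar (n d : ℕ) (M : ℕ → Set (Fin n → ℕ)) : Set (Finset (Fin n)) :=
  {F | ∃ i ≤ d, ∃ m ∈ M i, F = phiM (n - i) m}

/-- `Ψ̄(Δ)`: the metacomplex with `M^[i] = {ψ(F) : F ∈ Δ, |F| = i}`. -/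
def PsiBar (n : ℕ) (Δ : Set (Finset (Fin n))) : ℕ → Set (Fin n → ℕ) :=
  fun i => {p | ∃ F ∈ Δ, F.card = i ∧ p = psiM (n - i) F}

/-- The (finite) set of all monomials of degree `≤ t` in the variables `u_1, …, u_s`. -/
def monos (s t : ℕ) : Finset (Fin s → ℕ) :=
  ((Finset.univ : Finset (Fin s → Fin (t + 1))).image
      (fun f => fun i => ((f i : ℕ)))).filter (fun m => degM m ≤ t)

/-- An `M_{s,t}`-array: a positive-integer valued function on monomials of degree `≤ t`
in `u_1,…,u_s` satisfying conditions (1)–(3) of Definition 4.1. -/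
def IsMArray (s t : ℕ) (q : (Fin s → ℕ) → ℕ) : Prop :=
  (∀ m, degM m ≤ t → 0 < q m) ∧
  (∀ m, degM m ≤ t → ∀ i j : Fin s, i < j → 0 < m i → q m ≤ q (shiftMove m i j)) ∧
  (∀ m, degM m = t → q m = 1) ∧
  (∀ m, degM m < t → ∀ j : Fin s,
    mshadow (t - degM m) (q m) ≤ q (fun x => if x = j then m x + 1 else m x))

/-- An `M_{s,t}(h)`-composition of `r`: an `M_{s,t}`-array with `q^m ≥ h_{t - deg m}`
and `Σ_m q^m = r`. -/
def IsComposition (s t : ℕ) (h : ℕ → ℤ) (r : ℤ) (q : (Fin s → ℕ) → ℕ) : Prop :=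
  IsMArray s t q ∧ (∀ m, degM m ≤ t → h (t - degM m) ≤ (q m : ℤ)) ∧
  (∑ m ∈ monos s t, (q m : ℤ)) = r

/-- `Σ_s 𝒟`: the sum of the `q^m` over monomials divisible by the last variable `u_s`. -/
def SigmaLast (s t : ℕ) (q : (Fin s → ℕ) → ℕ) : ℕ :=
  ∑ m ∈ (monos s t).filter (fun m => ∃ i : Fin s, (i : ℕ) = s - 1 ∧ 0 < m i), q m

/-- `ρ_{s,t}(r;h) = min { Σ_s 𝒟 : 𝒟 an M_{s,t}(h)-composition of r }`. -/
def rho (s t : ℕ) (h : ℕ → ℤ) (r : ℤ) : ℕ :=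
  sInf {v : ℕ | ∃ q, IsComposition s t h r q ∧ SigmaLast s t q = v}

/-- A minimal non-face of `Δ`. -/
def IsMinNonface {n : ℕ} (Δ : Set (Finset (Fin n))) (G : Finset (Fin n)) : Prop :=
  G ∉ Δ ∧ ∀ G' ⊂ G, G' ∈ Δ

/-- The Alexander dual `Δ* = {F : [n]∖F ∉ Δ}`. -/
def dualCplx {n : ℕ} (Δ : Set (Finset (Fin n))) : Set (Finset (Fin n)) :=
  {F | Fᶜ ∉ Δ}

/-- `m_{ℓ,k}(Δ)`: the number of minimal non-faces `G` of `Δ` with `|G| = k` and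
`max G = ℓ + k - 1` (vertices labelled `1, …, n`). -/
def mGen {n : ℕ} (Δ : Set (Finset (Fin n))) (ℓ k : ℕ) : ℕ :=
  {G : Finset (Fin n) | IsMinNonface Δ G ∧ G.card = k ∧
    (∃ v ∈ G, (v : ℕ) + 1 = ℓ + k - 1) ∧ ∀ u ∈ G, (u : ℕ) + 1 ≤ ℓ + k - 1}.ncard

/-- `μ_{ℓ,k}(Δ)` (written `muGen Δ k ℓ`), defined by the recursion
`m_{ℓ,k} = μ_{ℓ,k} − Σ_{q=1}^{ℓ} μ_{q,k−1}`. -/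
def muGen {n : ℕ} (Δ : Set (Finset (Fin n))) : ℕ → ℕ → ℤ
  | 0, ℓ => (mGen Δ ℓ 0 : ℤ)
  | (k+1), ℓ => (mGen Δ ℓ (k+1) : ℤ) + ∑ q ∈ Finset.Icc 1 ℓ, muGen Δ k q

/-- A lattice path from `(0,0)` to `(n-a, a)`, as a word in `{N, E}` of length `n`
with exactly `a` letters `N` (`true` = north). -/
def NPath (n a : ℕ) : Type :=
  {L : Fin n → Bool // (Finset.univ.filter (fun i => L i = true)).card = a}

/-- `ν(L)`: the set of positions of the north steps of `L`. -/
def nuP {n a : ℕ} (L : NPath n a) : Finset (Fin n) :=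
  Finset.univ.filter (fun i => L.1 i = true)

/-- The height of the path after step `p` (number of north steps at positions `≤ p`). -/
def heightAt {n a : ℕ} (L : NPath n a) (p : Fin n) : ℕ :=
  (Finset.univ.filter (fun i => i ≤ p ∧ L.1 i = true)).card

/-- `L ≤ L'` iff `L` never goes above `L'`. -/
def PathLe {n a : ℕ} (L L' : NPath n a) : Prop :=
  ∀ p : Fin n, heightAt L p ≤ heightAt L' p

/-- An order ideal of the poset `𝓛_{r,a}` of lattice paths. -/
def IsOrderIdealP {n a : ℕ} (Q : Set (NPath n a)) : Prop :=
  ∀ L ∈ Q, ∀ L', PathLe L' L → L' ∈ Q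

/-- The x-coordinate of the step of `L` at position `p`. -/
def xcoordP {n a : ℕ} (L : NPath n a) (p : Fin n) : ℕ :=
  (Finset.univ.filter (fun j => j < p ∧ L.1 j = false)).card

/-- `λ(L)`: the monomial `∏ w_i^{λ_i(L)}`, where `λ_i(L)` is the number of north steps
of `L` with x-coordinate `i - 1`. -/
def lamP (r : ℕ) {n a : ℕ} (L : NPath n a) : Fin n → ℕ :=
  fun i => if (i : ℕ) < r then
    (Finset.univ.filter (fun p => L.1 p = true ∧ xcoordP L p = (i : ℕ))).card
  else 0

/-! The `h̃`-triangle fixes the face numbers: `Δ` has 6 vertices, 12 edges, 11 triangles and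
3 tetrahedra, and its pure 3-skeleton has 12 edges and 10 triangles. Shifting moves every vertex
up, so the 6 vertices are the last six elements of `[n]` and `Δ` may be read on `Fin 6`.
A tetrahedron through `0` other than `0345` has at least three shifts, too many for a shifted
family of three tetrahedra. If `0345` is a face, so are its shifts `1345` and `2345`; they
contain all 12 edges meeting `{3,4,5}`, and the triangle lying in no tetrahedron has an edge
inside `{0,1,2}`, a 13th edge. Otherwise no tetrahedron contains `0`, and the pure 3-skeleton
has at most `C(5,2) = 10` edges. -/

section Faces

variable {n : ℕ}

lemma fvec_le_card {Δ : Set (Finset (Fin n))} {j : ℕ} {S : Finset (Finset (Fin n))}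
    (h : ∀ F ∈ Δ, F.card = j → F ∈ S) : fvec Δ j ≤ S.card := by
  rw [fvec, ← Set.ncard_coe_finset S]
  exact Set.ncard_le_ncard (fun F hF => h F hF.1 hF.2) S.finite_toSet

lemma fvec_le_choose (Δ : Set (Finset (Fin n))) (j : ℕ) : fvec Δ j ≤ n.choose j := by
  simpa using fvec_le_card (Δ := Δ) (S := Finset.univ.powersetCard j)
    fun F _ hF => Finset.mem_powersetCard_univ.mpr hF

lemma card_le_fvec {Δ : Set (Finset (Fin n))} {j : ℕ} {S : Finset (Finset (Fin n))}
    (h : ∀ F ∈ S, F ∈ Δ ∧ F.card = j) : S.card ≤ fvec Δ j := by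
  rw [fvec, ← Set.ncard_coe_finset S]
  exact Set.ncard_le_ncard h (Set.toFinite _)

lemma exists_mem_notMem_of_fvec_lt {Γ Δ : Set (Finset (Fin n))} {j : ℕ}
    (h : fvec Γ j < fvec Δ j) : ∃ F ∈ Δ, F.card = j ∧ F ∉ Γ := by
  by_contra! hΓ
  exact h.not_ge (Set.ncard_le_ncard (fun F hF => ⟨hΓ F hF.1 hF.2, hF.2⟩) (Set.toFinite _))

lemma fvec_pureSkel_self (Δ : Set (Finset (Fin n))) (i : ℕ) :
    fvec (pureSkel Δ i) i = fvec Δ i := by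
  unfold fvec
  congr 1
  ext G
  constructor
  · rintro ⟨⟨F, hF, hFi, hGF⟩, hGi⟩
    exact ⟨Finset.eq_of_subset_of_card_le hGF (by omega) ▸ hF, hGi⟩
  · rintro ⟨hG, hGi⟩
    exact ⟨⟨G, hG, hGi, subset_rfl⟩, hGi⟩

end Faces

section Shifted

variable {n : ℕ}

def shifts (F : Finset (Fin n)) : Finset (Finset (Fin n)) :=
  ((F ×ˢ Fᶜ).filter (fun p => p.1 < p.2)).image (fun p => insert p.2 (F.erase p.1))

lemma card_of_mem_shifts {F G : Finset (Fin n)} (hG : G ∈ shifts F) : G.card = F.card := by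
  obtain ⟨⟨r, s⟩, hrs, rfl⟩ := Finset.mem_image.mp hG
  simp only [Finset.mem_filter, Finset.mem_product, Finset.mem_compl] at hrs
  obtain ⟨⟨hr, hs⟩, -⟩ := hrs
  rw [Finset.card_insert_of_notMem (fun h => hs (Finset.mem_of_mem_erase h)),
    Finset.card_erase_add_one hr]

lemma ShiftedCplx.shifts_subset {Δ : Set (Finset (Fin n))} (hs : ShiftedCplx Δ)
    {F : Finset (Fin n)} (hF : F ∈ Δ) : ↑(shifts F) ⊆ Δ := by
  intro G hG
  obtain ⟨⟨r, s⟩, hrs, rfl⟩ := Finset.mem_image.mp hG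
  simp only [Finset.mem_filter, Finset.mem_product, Finset.mem_compl] at hrs
  exact hs F hF r s hrs.2 hrs.1.1 hrs.1.2

lemma ShiftedCplx.singleton_mem_of_le {Δ : Set (Finset (Fin n))} (hs : ShiftedCplx Δ)
    {v w : Fin n} (hv : {v} ∈ Δ) (hvw : v ≤ w) : {w} ∈ Δ := by
  rcases hvw.eq_or_lt with rfl | hlt
  · exact hv
  · simpa using hs {v} hv v w hlt (Finset.mem_singleton_self v) (by simpa using hlt.ne')

lemma ShiftedCplx.le_of_mem {m k : ℕ} {Δ : Set (Finset (Fin (m + k)))} (hΔ : IsCplx Δ)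
    (hs : ShiftedCplx Δ) (hk : fvec Δ 1 ≤ k) {F : Finset (Fin (m + k))} (hF : F ∈ Δ)
    {v : Fin (m + k)} (hv : v ∈ F) : m ≤ v := by
  have hvΔ : {v} ∈ Δ := hΔ F hF {v} (Finset.singleton_subset_iff.mpr hv)
  have hIci : ((Finset.Ici v).map ⟨singleton, Finset.singleton_injective⟩).card ≤ fvec Δ 1 :=
    card_le_fvec fun G hG => by
      obtain ⟨w, hw, rfl⟩ := Finset.mem_map.mp hG
      exact ⟨hs.singleton_mem_of_le hvΔ (Finset.mem_Ici.mp hw), Finset.card_singleton w⟩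
  rw [Finset.card_map, Fin.card_Ici] at hIci
  omega

lemma ShiftedCplx.subset_map_natAddOrderEmb {m k : ℕ} {Δ : Set (Finset (Fin (m + k)))}
    (hΔ : IsCplx Δ) (hs : ShiftedCplx Δ) (hk : fvec Δ 1 ≤ k) :
    ∀ F ∈ Δ, F ⊆ Finset.univ.map (Fin.natAddOrderEmb m).toEmbedding := fun _ hF v hv =>
  have hmv := hs.le_of_mem hΔ hk hF hv
  Finset.mem_map.mpr ⟨⟨v - m, by omega⟩, Finset.mem_univ _,
    Fin.ext (by simp [Fin.natAddOrderEmb]; omega)⟩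

end Shifted

section Restriction

variable {k n : ℕ}

lemma IsCplx.preimage_map {Δ : Set (Finset (Fin n))} (hΔ : IsCplx Δ) (e : Fin k ↪ Fin n) :
    IsCplx (Finset.map e ⁻¹' Δ) :=
  fun _ hS _ hTS => hΔ _ hS _ (Finset.map_subset_map.mpr hTS)

lemma ShiftedCplx.preimage_map {Δ : Set (Finset (Fin n))} (hs : ShiftedCplx Δ)
    (e : Fin k ↪o Fin n) : ShiftedCplx (Finset.map e.toEmbedding ⁻¹' Δ) := by
  intro S hS r s hrs hr hsS
  have h := hs _ hS (e r) (e s) (e.lt_iff_lt.mpr hrs) (Finset.mem_map_of_mem _ hr)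
    (by simpa using hsS)
  show (insert s (S.erase r)).map e.toEmbedding ∈ Δ
  rwa [Finset.map_insert, Finset.map_erase]

lemma fvec_preimage_map {Δ : Set (Finset (Fin n))} (e : Fin k ↪ Fin n)
    (h : ∀ F ∈ Δ, F ⊆ Finset.univ.map e) (j : ℕ) :
    fvec (Finset.map e ⁻¹' Δ) j = fvec Δ j := by
  unfold fvec
  rw [← Set.ncard_image_of_injective _ (Finset.map_injective e)]
  congr 1
  ext F
  constructor
  · rintro ⟨S, ⟨hS, hSj⟩, rfl⟩
    exact ⟨hS, by rwa [Finset.card_map]⟩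
  · rintro ⟨hF, hFj⟩
    obtain ⟨S, -, rfl⟩ := Finset.subset_map_iff.mp (h F hF)
    exact ⟨S, ⟨hF, by rwa [Finset.card_map] at hFj⟩, rfl⟩

lemma pureSkel_preimage_map {Δ : Set (Finset (Fin n))} (e : Fin k ↪ Fin n)
    (h : ∀ F ∈ Δ, F ⊆ Finset.univ.map e) (i : ℕ) :
    pureSkel (Finset.map e ⁻¹' Δ) i = Finset.map e ⁻¹' pureSkel Δ i := by
  ext G
  constructor
  · rintro ⟨S, hS, hSi, hGS⟩
    exact ⟨S.map e, hS, by rwa [Finset.card_map], Finset.map_subset_map.mpr hGS⟩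
  · rintro ⟨F, hF, hFi, hGF⟩
    obtain ⟨S, -, rfl⟩ := Finset.subset_map_iff.mp (h F hF)
    exact ⟨S, hF, by rwa [Finset.card_map] at hFi, Finset.map_subset_map.mp hGF⟩

lemma fvec_pureSkel_preimage_map {Δ : Set (Finset (Fin n))} (e : Fin k ↪ Fin n)
    (h : ∀ F ∈ Δ, F ⊆ Finset.univ.map e) (i j : ℕ) :
    fvec (pureSkel (Finset.map e ⁻¹' Δ) i) j = fvec (pureSkel Δ i) j := by
  rw [pureSkel_preimage_map e h, fvec_preimage_map e]
  rintro G ⟨F, hF, -, hGF⟩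
  exact hGF.trans (h F hF)

end Restriction

section SixVertices

def tetrahedraThrough345 : Finset (Finset (Fin 6)) := {{0, 3, 4, 5}, {1, 3, 4, 5}, {2, 3, 4, 5}}

-- A 4-subset of `Fin 6` with complement `{a, b}`, `a < b`, has `a + b - 1` shifts.
set_option maxRecDepth 10000 in
lemma eq_of_zero_mem_of_card_insert_shifts_le_three :
    ∀ F : Finset (Fin 6), F.card = 4 → 0 ∈ F → (insert F (shifts F)).card ≤ 3 →
      F = {0, 3, 4, 5} := by
  decide

set_option maxRecDepth 10000 in
lemma exists_edge_notMem_biUnion_tetrahedraThrough345 :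
    ∀ T : Finset (Fin 6), T.card = 3 → (∀ F ∈ tetrahedraThrough345, ¬ T ⊆ F) →
      ∃ e ⊆ T, e.card = 2 ∧ e ∉ tetrahedraThrough345.biUnion (Finset.powersetCard 2) := by
  decide

lemma card_of_mem_tetrahedraThrough345 : ∀ F ∈ tetrahedraThrough345, F.card = 4 := by
  decide

set_option maxRecDepth 10000 in
lemma card_biUnion_tetrahedraThrough345 :
    (tetrahedraThrough345.biUnion (Finset.powersetCard 2)).card = 12 := by
  decide

lemma ShiftedCplx.eq_of_zero_mem {Δ : Set (Finset (Fin 6))} (hs : ShiftedCplx Δ)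
    (h4 : fvec Δ 4 ≤ 3) {F : Finset (Fin 6)} (hF : F ∈ Δ) (hF4 : F.card = 4) (h0 : 0 ∈ F) :
    F = {0, 3, 4, 5} := by
  refine eq_of_zero_mem_of_card_insert_shifts_le_three F hF4 h0 (le_trans ?_ h4)
  refine card_le_fvec fun G hG => ?_
  rcases Finset.mem_insert.mp hG with rfl | hG
  · exact ⟨hF, hF4⟩
  · exact ⟨hs.shifts_subset hF hG, (card_of_mem_shifts hG).trans hF4⟩

lemma ShiftedCplx.twelve_lt_fvec_two {Δ : Set (Finset (Fin 6))} (hΔ : IsCplx Δ)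
    (hs : ShiftedCplx Δ) (h0 : {0, 3, 4, 5} ∈ Δ) (h3 : fvec (pureSkel Δ 4) 3 < fvec Δ 3) :
    12 < fvec Δ 2 := by
  have hA : ↑tetrahedraThrough345 ⊆ Δ := by
    rw [show tetrahedraThrough345 = insert {0, 3, 4, 5} (shifts {0, 3, 4, 5}) by decide,
      Finset.coe_insert]
    exact Set.insert_subset h0 (hs.shifts_subset h0)
  obtain ⟨T, hT, hT3, hTA⟩ := exists_mem_notMem_of_fvec_lt h3
  obtain ⟨e, heT, he2, heA⟩ := exists_edge_notMem_biUnion_tetrahedraThrough345 T hT3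
    fun F hF hTF => hTA ⟨F, hA hF, card_of_mem_tetrahedraThrough345 F hF, hTF⟩
  calc 12 = (tetrahedraThrough345.biUnion (Finset.powersetCard 2)).card :=
        card_biUnion_tetrahedraThrough345.symm
    _ < (insert e (tetrahedraThrough345.biUnion (Finset.powersetCard 2))).card :=
        Finset.card_lt_card (Finset.ssubset_insert heA)
    _ ≤ fvec Δ 2 := card_le_fvec fun G hG => by
        rcases Finset.mem_insert.mp hG with rfl | hG
        · exact ⟨hΔ T hT G heT, he2⟩
        · obtain ⟨F, hF, hGF⟩ := Finset.mem_biUnion.mp hG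
          rw [Finset.mem_powersetCard] at hGF
          exact ⟨hΔ F (hA hF) G hGF.1, hGF.2⟩

lemma fvec_pureSkel_four_two_le_ten {Δ : Set (Finset (Fin 6))}
    (h : ∀ F ∈ Δ, F.card = 4 → 0 ∉ F) : fvec (pureSkel Δ 4) 2 ≤ 10 := by
  refine (fvec_le_card (S := (Finset.univ.erase 0).powersetCard 2) ?_).trans (by decide)
  rintro G ⟨F, hF, hF4, hGF⟩ hG2
  refine Finset.mem_powersetCard.mpr
    ⟨fun v hv => Finset.mem_erase.mpr ⟨?_, Finset.mem_univ v⟩, hG2⟩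
  rintro rfl
  exact h F hF hF4 (hGF hv)

lemma ShiftedCplx.twelve_lt_fvec_two_or_fvec_pureSkel_le_ten {Δ : Set (Finset (Fin 6))}
    (hΔ : IsCplx Δ) (hs : ShiftedCplx Δ) (h4 : fvec Δ 4 ≤ 3)
    (h3 : fvec (pureSkel Δ 4) 3 < fvec Δ 3) :
    12 < fvec Δ 2 ∨ fvec (pureSkel Δ 4) 2 ≤ 10 := by
  by_cases h0 : {0, 3, 4, 5} ∈ Δ
  · exact Or.inl (hs.twelve_lt_fvec_two hΔ h0 h3)
  · refine Or.inr (fvec_pureSkel_four_two_le_ten fun F hF hF4 hF0 => h0 ?_)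
    rwa [← hs.eq_of_zero_mem h4 hF hF4 hF0]

end SixVertices

/-- (Example 2.3) There is no shifted simplicial complex of dimension `3`
whose `h̃`-triangle has rows `(1), (1,5), (1,4,7), (1,3,3,4), (1,2,0,0,0)`. -/
theorem no_shifted_complex_with_given_htriangle :
    ¬ ∃ (n : ℕ) (Δ : Set (Finset (Fin n))), IsCplx Δ ∧ ShiftedCplx Δ ∧
      (∀ F ∈ Δ, F.card ≤ 4) ∧ (∃ F ∈ Δ, F.card = 4) ∧
      htilde Δ 0 0 = 1 ∧
      htilde Δ 1 0 = 1 ∧ htilde Δ 1 1 = 5 ∧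
      htilde Δ 2 0 = 1 ∧ htilde Δ 2 1 = 4 ∧ htilde Δ 2 2 = 7 ∧
      htilde Δ 3 0 = 1 ∧ htilde Δ 3 1 = 3 ∧ htilde Δ 3 2 = 3 ∧ htilde Δ 3 3 = 4 ∧
      htilde Δ 4 0 = 1 ∧ htilde Δ 4 1 = 2 ∧ htilde Δ 4 2 = 0 ∧
      htilde Δ 4 3 = 0 ∧ htilde Δ 4 4 = 0 := by
  rintro ⟨n, Δ, hΔ, hs, -, -, -, h10, h11, h20, h21, h22, h30, h31, h32, h33,
    h40, h41, h42, h43, h44⟩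
  simp only [htilde, hvec, Finset.sum_range_succ, Finset.sum_range_zero]
    at h10 h11 h20 h21 h22 h30 h31 h32 h33 h40 h41 h42 h43 h44
  norm_num [Nat.choose] at h10 h11 h20 h21 h22 h30 h31 h32 h33 h40 h41 h42 h43 h44
  have hf1 : fvec Δ 1 = 6 := by rw [← fvec_pureSkel_self]; omega
  have hf2 : fvec Δ 2 = 12 := by rw [← fvec_pureSkel_self]; omega
  have hf3 : fvec Δ 3 = 11 := by rw [← fvec_pureSkel_self]; omega
  have hf4 : fvec Δ 4 = 3 := by rw [← fvec_pureSkel_self]; omega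
  obtain ⟨m, rfl⟩ : ∃ m, n = m + 6 :=
    Nat.exists_eq_add_of_le' (by simpa [hf1] using fvec_le_choose Δ 1)
  have he := hs.subset_map_natAddOrderEmb hΔ hf1.le
  rcases (hs.preimage_map (Fin.natAddOrderEmb m)).twelve_lt_fvec_two_or_fvec_pureSkel_le_ten
    (hΔ.preimage_map _) (by rw [fvec_preimage_map _ he]; omega)
    (by rw [fvec_preimage_map _ he, fvec_pureSkel_preimage_map _ he]; omega) with h | h
  · rw [fvec_preimage_map _ he] at h; omega
  · rw [fvec_pureSkel_preimage_map _ he] at h; omega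
end
end

section
/- For positive integers r and a, the map Q ↦ λ(Q) := {λ(L) : L ∈ Q} is a bijection from the set of order ideals of the lattice-path poset L_{r,a} onto the set of shifted multicomplexes on W_r consisting of monomials of degree at most a. -/
open Finset

noncomputable section

/-!
Everything is governed by partial sums of exponent vectors. If `E_j` is the position of the
`(j+1)`-st east step of `L`, then `λ_1(L) + ⋯ + λ_(j+1)(L) = E_j - j`. Hence `λ` identifies paths
with the monomials of degree `≤ a` on `W_r`, and `L' ≤ L` (every east step of `L'` comes no later
than that of `L`) becomes dominance of partial sums. A set of such monomials is a shifted
multicomplex iff it is closed under dominance: the moves `w_i ↦ w_(i+1)` and division by `w_r`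
lower exactly one partial sum by one, and if `m'` is dominated by `m ≠ m'`, the move lowering the
first partial sum where `m'` falls behind `m` keeps `m'` dominated. So order ideals of paths
correspond to dominance-closed sets of monomials.
-/

section PartialSums

variable {k : ℕ}

def partialSum (m : Fin k → ℕ) (x : ℕ) : ℕ :=
  ∑ t ∈ univ.filter (fun t : Fin k => (t : ℕ) < x), m t

@[simp]
theorem partialSum_zero (m : Fin k → ℕ) : partialSum m 0 = 0 := by
  simp [partialSum]

theorem partialSum_succ (m : Fin k → ℕ) (t : Fin k) :
    partialSum m (t + 1) = partialSum m t + m t := by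
  have : univ.filter (fun s : Fin k => (s : ℕ) < t + 1) =
      insert t (univ.filter fun s : Fin k => (s : ℕ) < t) := by
    refine Finset.ext fun s => ?_
    simp only [mem_filter, mem_univ, true_and, mem_insert, Fin.ext_iff]
    omega
  rw [partialSum, partialSum, this, sum_insert (by simp), add_comm]

theorem partialSum_mono (m : Fin k → ℕ) : Monotone (partialSum m) := fun _ _ hxy =>
  sum_le_sum_of_subset (monotone_filter_right _ fun _ _ h => lt_of_lt_of_le h hxy)

theorem partialSum_add (m m' : Fin k → ℕ) (x : ℕ) :
    partialSum (m + m') x = partialSum m x + partialSum m' x :=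
  sum_add_distrib

theorem partialSum_single (i : Fin k) (x : ℕ) :
    partialSum (Pi.single i 1) x = if (i : ℕ) < x then 1 else 0 := by
  simp [partialSum, sum_pi_single']

theorem partialSum_le_partialSum {m m' : Fin k → ℕ} (h : ∀ i, m' i ≤ m i) (x : ℕ) :
    partialSum m' x ≤ partialSum m x :=
  sum_le_sum fun i _ => h i

theorem partialSum_of_le (m : Fin k → ℕ) {x : ℕ} (hx : k ≤ x) : partialSum m x = degM m := by
  rw [partialSum, filter_true_of_mem fun t _ => lt_of_lt_of_le t.2 hx, degM]

theorem partialSum_le_degM (m : Fin k → ℕ) (x : ℕ) : partialSum m x ≤ degM m :=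
  (partialSum_mono m (le_max_left x k)).trans_eq (partialSum_of_le m (le_max_right x k))

theorem SupportedOn.partialSum_of_le {r : ℕ} {m : Fin k → ℕ} (hm : SupportedOn r m) {x : ℕ}
    (hx : r ≤ x) : partialSum m x = degM m := by
  rw [degM, ← sum_filter_add_sum_filter_not univ (fun t : Fin k => (t : ℕ) < x),
    sum_eq_zero (s := filter (fun t : Fin k => ¬(t : ℕ) < x) _) fun t ht => hm t (by
      simp only [mem_filter] at ht; omega), add_zero, partialSum]

theorem SupportedOn.eq_of_partialSum_eq {r : ℕ} {m m' : Fin k → ℕ} (hm : SupportedOn r m)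
    (hm' : SupportedOn r m') (h : ∀ x ≤ r, partialSum m x = partialSum m' x) : m = m' := by
  funext t
  by_cases ht : (t : ℕ) < r
  · have := h (t + 1) ht
    rw [partialSum_succ, partialSum_succ, h t ht.le] at this
    omega
  · rw [hm t (by omega), hm' t (by omega)]

def DominanceLE (r : ℕ) (m' m : Fin k → ℕ) : Prop :=
  ∀ x ≤ r, partialSum m' x ≤ partialSum m x

end PartialSums

section ShiftMove

variable {k : ℕ} {m : Fin k → ℕ} {i j : Fin k}

theorem shiftMove_add_single (hij : i ≠ j) (hmi : 0 < m i) :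
    shiftMove m i j + Pi.single i 1 = m + Pi.single j 1 := by
  funext t
  simp only [shiftMove, Pi.add_apply, Pi.single_apply]
  split_ifs <;> subst_vars <;> omega

theorem shiftMove_self_add_single (hmi : 0 < m i) : shiftMove m i i + Pi.single i 1 = m := by
  funext t
  simp only [shiftMove, Pi.add_apply, Pi.single_apply]
  split_ifs <;> subst_vars <;> omega

theorem shiftMove_self_le (t : Fin k) : shiftMove m i i t ≤ m t := by
  unfold shiftMove
  split_ifs with h
  · exact h ▸ Nat.sub_le _ _
  · exact le_rfl

theorem partialSum_shiftMove (hij : i ≠ j) (hmi : 0 < m i) (x : ℕ) :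
    partialSum (shiftMove m i j) x + (if (i : ℕ) < x then 1 else 0) =
      partialSum m x + if (j : ℕ) < x then 1 else 0 := by
  rw [← partialSum_single, ← partialSum_single, ← partialSum_add, ← partialSum_add,
    shiftMove_add_single hij hmi]

theorem partialSum_shiftMove_self (hmi : 0 < m i) (x : ℕ) :
    partialSum (shiftMove m i i) x + (if (i : ℕ) < x then 1 else 0) = partialSum m x := by
  rw [← partialSum_single, ← partialSum_add, shiftMove_self_add_single hmi]

theorem SupportedOn.shiftMove {r : ℕ} (hm : SupportedOn r m) (hi : (i : ℕ) < r)
    (hj : (j : ℕ) < r) : SupportedOn r (shiftMove m i j) := by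
  intro t ht
  have hti : t ≠ i := by rintro rfl; omega
  have htj : t ≠ j := by rintro rfl; omega
  simp [_root_.shiftMove, hti, htj, hm t ht]

end ShiftMove

section ShiftedMulticomplex

variable {k r : ℕ} {M : Set (Fin k → ℕ)} {m m' : Fin k → ℕ}

theorem DominanceLE.of_le (h : ∀ i, m' i ≤ m i) : DominanceLE r m' m :=
  fun x _ => partialSum_le_partialSum h x

theorem DominanceLE.shiftMove {i j : Fin k} (hij : i < j) (hmi : 0 < m i) :
    DominanceLE r (shiftMove m i j) m := by
  intro x _
  have := partialSum_shiftMove hij.ne hmi x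
  have : (i : ℕ) < j := hij
  split_ifs at * <;> omega

theorem degM_shiftMove {i j : Fin k} (hij : i ≠ j) (hmi : 0 < m i) :
    degM (shiftMove m i j) = degM m := by
  have := partialSum_shiftMove hij hmi k
  rwa [partialSum_of_le _ le_rfl, partialSum_of_le _ le_rfl, if_pos i.2, if_pos j.2,
    add_left_inj] at this

theorem ShiftedMC.exists_lower_partialSum (hrk : r ≤ k) (hM : IsMulticx M) (hS : ShiftedMC r M)
    (hm : m ∈ M) (hsupp : SupportedOn r m) {i : Fin k} (hir : (i : ℕ) < r) (hmi : 0 < m i) :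
    ∃ m'' ∈ M, SupportedOn r m'' ∧
      ∀ x ≤ r, partialSum m'' x + (if x = i + 1 then 1 else 0) = partialSum m x := by
  by_cases hnext : (i : ℕ) + 1 < r
  · obtain ⟨j, hj⟩ : ∃ j : Fin k, (j : ℕ) = i + 1 := ⟨⟨i + 1, by omega⟩, rfl⟩
    have hij : i < j := Fin.lt_def.2 (by omega)
    refine ⟨shiftMove m i j, hS m hm i j hij (by omega) hmi, hsupp.shiftMove hir (by omega),
      fun x _ => ?_⟩
    have := partialSum_shiftMove hij.ne hmi x
    split_ifs at * <;> omega
  · refine ⟨shiftMove m i i, hM m hm _ fun t => shiftMove_self_le t,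
      hsupp.shiftMove hir hir, fun x hx => ?_⟩
    have := partialSum_shiftMove_self hmi x
    split_ifs at * <;> omega

theorem DominanceLE.exists_first_lt (hrk : r ≤ k) (hdom : DominanceLE r m' m)
    (hne : ¬∀ x ≤ r, partialSum m x = partialSum m' x) :
    ∃ i : Fin k, (i : ℕ) < r ∧ partialSum m' i = partialSum m i ∧
      partialSum m' (i + 1) < partialSum m (i + 1) := by
  push Not at hne
  have hex : ∃ x, x ≤ r ∧ partialSum m' x < partialSum m x := by
    obtain ⟨x, hx, hne⟩ := hne
    exact ⟨x, hx, lt_of_le_of_ne (hdom x hx) (Ne.symm hne)⟩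
  classical
  obtain ⟨hx₀r, hx₀⟩ := Nat.find_spec hex
  have hx₀ne : Nat.find hex ≠ 0 := fun h => by
    rw [h, partialSum_zero, partialSum_zero] at hx₀
    exact lt_irrefl 0 hx₀
  obtain ⟨i, hi⟩ := Nat.exists_eq_succ_of_ne_zero hx₀ne
  have hbelow : partialSum m' i = partialSum m i :=
    le_antisymm (hdom i (by omega)) (not_lt.1 fun h => Nat.find_min hex (by omega) ⟨by omega, h⟩)
  rw [hi] at hx₀
  exact ⟨⟨i, by omega⟩, show i < r by omega, hbelow, hx₀⟩

theorem ShiftedMC.mem_of_dominanceLE (hrk : r ≤ k) (hM : IsMulticx M) (hS : ShiftedMC r M)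
    (hm : m ∈ M) (hsupp : SupportedOn r m) (hsupp' : SupportedOn r m')
    (hdom : DominanceLE r m' m) : m' ∈ M := by
  induction hN : ∑ x ∈ range (r + 1), partialSum m x using Nat.strong_induction_on
    generalizing m with
  | _ N ih =>
  by_cases heq : ∀ x ≤ r, partialSum m x = partialSum m' x
  · rwa [← hsupp.eq_of_partialSum_eq hsupp' heq]
  obtain ⟨i, hir, hbelow, hlt⟩ := hdom.exists_first_lt hrk heq
  have hmi : 0 < m i := by
    have := partialSum_succ m i
    have := partialSum_mono m' (Nat.le_add_right (i : ℕ) 1)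
    omega
  obtain ⟨m'', hm'', hsupp'', hlower⟩ := hS.exists_lower_partialSum hrk hM hm hsupp hir hmi
  refine ih _ ?_ hm'' hsupp'' (fun x hx => ?_) rfl
  · rw [← hN]
    refine sum_lt_sum (fun x hx => ?_) ⟨i + 1, mem_range.2 (by omega), ?_⟩
    · have := hlower x (Nat.lt_succ_iff.1 (mem_range.1 hx))
      omega
    · have := hlower (i + 1) hir
      rw [if_pos rfl] at this
      omega
  · have hl := hlower x hx
    by_cases hxi : x = i + 1
    · subst hxi
      rw [if_pos rfl] at hl
      omega
    · rw [if_neg hxi, add_zero] at hl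
      exact hl ▸ hdom x hx

end ShiftedMulticomplex

theorem Monotone.lt_card_filter_iff {α : Type*} [Preorder α] {r : ℕ} {f : Fin r → α}
    (hf : Monotone f) {P : α → Prop} [DecidablePred P] (hP : ∀ ⦃x y⦄, x ≤ y → P y → P x)
    (j : Fin r) : (j : ℕ) < #(univ.filter fun i => P (f i)) ↔ P (f j) := by
  constructor
  · intro hlt
    by_contra hj
    have hsub : univ.filter (fun i => P (f i)) ⊆ Iio j := fun i hi =>
      mem_Iio.2 (lt_of_not_ge fun hji => hj (hP (hf hji) (mem_filter.1 hi).2))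
    have := card_le_card hsub
    rw [Fin.card_Iio] at this
    omega
  · intro hj
    have hsub : Iic j ⊆ univ.filter (fun i => P (f i)) := fun i hi =>
      mem_filter.2 ⟨mem_univ i, hP (hf (mem_Iic.1 hi)) hj⟩
    have := card_le_card hsub
    rw [Fin.card_Iic] at this
    omega

theorem Monotone.forall_card_filter_le_le_iff {α : Type*} [LinearOrder α] {r : ℕ}
    {f g : Fin r → α} (hf : Monotone f) (hg : Monotone g) :
    (∀ p, #(univ.filter fun i => f i ≤ p) ≤ #(univ.filter fun i => g i ≤ p)) ↔
      ∀ j, g j ≤ f j := by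
  constructor
  · intro h j
    have hle : ∀ ⦃x y : α⦄, x ≤ y → y ≤ f j → x ≤ f j := fun _ _ => le_trans
    have := (hf.lt_card_filter_iff hle j).2 le_rfl
    exact (hg.lt_card_filter_iff hle j).1 (this.trans_le (h (f j)))
  · intro h p
    exact card_le_card (monotone_filter_right _ fun i _ hi => (h i).trans hi)

namespace NPath

variable {r a : ℕ}

def eastSet (L : NPath (r + a) a) : Finset (Fin (r + a)) :=
  univ.filter fun p => L.1 p = false

theorem card_eastSet (L : NPath (r + a) a) : #L.eastSet = r := by
  have : L.eastSet = (univ.filter fun p => L.1 p = true)ᶜ := by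
    ext p
    simp [eastSet]
  rw [this, card_compl, L.2, Fintype.card_fin]
  omega

theorem eastSet_injective : Function.Injective (eastSet : NPath (r + a) a → _) := by
  intro L L' h
  refine Subtype.ext (funext fun p => ?_)
  have := congrArg (p ∈ ·) h
  simp only [eastSet, mem_filter, mem_univ, true_and, eq_iff_iff] at this
  cases hL : L.1 p <;> cases hL' : L'.1 p <;> simp_all

def eastStep (L : NPath (r + a) a) : Fin r ↪o Fin (r + a) :=
  L.eastSet.orderEmbOfFin L.card_eastSet

theorem map_eastStep_univ (L : NPath (r + a) a) :
    univ.map L.eastStep.toEmbedding = L.eastSet :=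
  map_orderEmbOfFin_univ _ _

theorem card_filter_eastStep (L : NPath (r + a) a) (P : Fin (r + a) → Prop) [DecidablePred P] :
    #(univ.filter fun i => P (L.eastStep i)) = #(univ.filter fun p => L.1 p = false ∧ P p) := by
  have h := filter_map (f := L.eastStep.toEmbedding) (s := univ) (p := P)
  rw [map_eastStep_univ, eastSet, filter_filter] at h
  rw [h, card_map]
  rfl

theorem xcoordP_eq_card (L : NPath (r + a) a) (p : Fin (r + a)) :
    xcoordP L p = #(univ.filter fun i => L.eastStep i < p) := by
  rw [card_filter_eastStep L (· < p), xcoordP]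
  simp_rw [and_comm]

theorem heightAt_add_card (L : NPath (r + a) a) (p : Fin (r + a)) :
    heightAt L p + #(univ.filter fun i => L.eastStep i ≤ p) = p + 1 := by
  rw [card_filter_eastStep L (· ≤ p), heightAt, ← Fin.card_Iic, ← filter_ge_eq_Iic,
    ← card_filter_add_card_filter_not (s := univ.filter (· ≤ p)) (fun i => L.1 i = true),
    filter_filter, filter_filter]
  congr 2
  ext i
  simp [and_comm]

theorem supportedOn_lamP (L : NPath (r + a) a) : SupportedOn r (lamP r L) :=
  fun _ hi => if_neg (by omega)

theorem partialSum_lamP (L : NPath (r + a) a) {x : ℕ} (hx : x ≤ r) :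
    partialSum (lamP r L) x = #(univ.filter fun p => L.1 p = true ∧ xcoordP L p < x) := by
  rw [card_eq_sum_card_fiberwise (f := xcoordP L)
    (t := (univ.filter fun t : Fin (r + a) => (t : ℕ) < x).map Fin.valEmbedding), sum_map,
    partialSum]
  · refine sum_congr rfl fun t ht => ?_
    rw [mem_filter] at ht
    rw [lamP, if_pos (by omega), filter_filter]
    congr 1
    ext p
    simp only [mem_filter, mem_univ, true_and, Fin.valEmbedding_apply, and_assoc]
    exact ⟨fun ⟨hp, he⟩ => ⟨hp, he ▸ ht.2, he⟩, fun ⟨hp, _, he⟩ => ⟨hp, he⟩⟩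
  · intro p hp
    have hpx : xcoordP L p < x := (mem_filter.1 hp).2.2
    exact mem_map.2 ⟨⟨xcoordP L p, by omega⟩, mem_filter.2 ⟨mem_univ _, hpx⟩, rfl⟩

theorem degM_lamP_le (L : NPath (r + a) a) : degM (lamP r L) ≤ a := by
  rw [← (supportedOn_lamP L).partialSum_of_le le_rfl, partialSum_lamP L le_rfl]
  exact (card_le_card (monotone_filter_right _ fun _ _ h => h.1)).trans_eq L.2

theorem partialSum_lamP_succ (L : NPath (r + a) a) (j : Fin r) :
    partialSum (lamP r L) (j + 1) + j = L.eastStep j := by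
  have hbefore : univ.filter (fun p => L.1 p = true ∧ xcoordP L p < j + 1) =
      univ.filter fun p => p ≤ L.eastStep j ∧ L.1 p = true := by
    refine filter_congr fun p _ => ?_
    rw [Nat.lt_succ_iff, xcoordP_eq_card, ← not_lt,
      L.eastStep.monotone.lt_card_filter_iff (fun _ _ => lt_of_le_of_lt), not_lt, and_comm]
  have hheight := L.heightAt_add_card (L.eastStep j)
  have hj : univ.filter (fun i => L.eastStep i ≤ L.eastStep j) = Iic j := by
    ext i
    simp
  rw [hj, Fin.card_Iic, heightAt] at hheight
  rw [partialSum_lamP L j.2, hbefore]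
  omega

theorem pathLe_iff_eastStep_le (L' L : NPath (r + a) a) :
    PathLe L' L ↔ ∀ j, L'.eastStep j ≤ L.eastStep j := by
  rw [← L.eastStep.monotone.forall_card_filter_le_le_iff L'.eastStep.monotone]
  refine forall_congr' fun p => ?_
  have := L.heightAt_add_card p
  have := L'.heightAt_add_card p
  omega

theorem pathLe_iff_dominanceLE (L' L : NPath (r + a) a) :
    PathLe L' L ↔ DominanceLE r (lamP r L') (lamP r L) := by
  rw [pathLe_iff_eastStep_le]
  constructor
  · rintro h (_ | j) hj
    · simp
    · have hL : partialSum (lamP r L) (j + 1) + j = L.eastStep ⟨j, hj⟩ :=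
        L.partialSum_lamP_succ ⟨j, hj⟩
      have hL' : partialSum (lamP r L') (j + 1) + j = L'.eastStep ⟨j, hj⟩ :=
        L'.partialSum_lamP_succ ⟨j, hj⟩
      have hle : (L'.eastStep ⟨j, hj⟩ : ℕ) ≤ L.eastStep ⟨j, hj⟩ := h _
      omega
  · intro h j
    have hL := L.partialSum_lamP_succ j
    have hL' := L'.partialSum_lamP_succ j
    have hle := h (j + 1) j.2
    exact Fin.le_def.2 (by omega)

theorem lamP_injective : Function.Injective (lamP r : NPath (r + a) a → Fin (r + a) → ℕ) := by
  intro L L' h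
  have hstep : L.eastStep = L'.eastStep := by
    ext j
    have hL := L.partialSum_lamP_succ j
    have hL' := L'.partialSum_lamP_succ j
    rw [h] at hL
    omega
  apply eastSet_injective
  rw [← map_eastStep_univ, ← map_eastStep_univ, hstep]

def ofEastStep (e : Fin r ↪o Fin (r + a)) : NPath (r + a) a :=
  ⟨fun p => decide (p ∉ univ.map e.toEmbedding), by
    have : univ.filter (fun p => decide (p ∉ univ.map e.toEmbedding) = true) =
        (univ.map e.toEmbedding)ᶜ := by
      ext p
      simp
    rw [this, card_compl, card_map, card_univ, Fintype.card_fin, Fintype.card_fin]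
    omega⟩

theorem eastStep_ofEastStep (e : Fin r ↪o Fin (r + a)) : (ofEastStep e).eastStep = e :=
  (orderEmbOfFin_unique' _ fun i => by simp [eastSet, ofEastStep]).symm

/-- East steps placed so that exactly `m_1 + ⋯ + m_(i+1)` north steps precede the
`(i+1)`-st one. -/
def eastStepOfMonomial (m : Fin (r + a) → ℕ) (hdeg : degM m ≤ a) : Fin r ↪o Fin (r + a) :=
  OrderEmbedding.ofStrictMono
    (fun i => ⟨partialSum m (i + 1) + i, by have := partialSum_le_degM m (i + 1); omega⟩)
    fun i i' hii' => by
      have : (i : ℕ) < i' := hii'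
      have := partialSum_mono m (show (i : ℕ) + 1 ≤ i' + 1 by omega)
      show partialSum m (i + 1) + i < partialSum m (i' + 1) + i'
      omega

theorem range_lamP :
    Set.range (lamP r : NPath (r + a) a → Fin (r + a) → ℕ) =
      {m | SupportedOn r m ∧ degM m ≤ a} := by
  ext m
  constructor
  · rintro ⟨L, rfl⟩
    exact ⟨supportedOn_lamP L, degM_lamP_le L⟩
  · rintro ⟨hsupp, hdeg⟩
    refine ⟨ofEastStep (eastStepOfMonomial m hdeg),
      (supportedOn_lamP _).eq_of_partialSum_eq hsupp ?_⟩
    rintro (_ | j) hj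
    · simp
    · have h := (ofEastStep (eastStepOfMonomial m hdeg)).partialSum_lamP_succ ⟨j, hj⟩
      rw [eastStep_ofEastStep] at h
      exact Nat.add_right_cancel (m := j) h

end NPath

theorem Function.Injective.bijOn_image_downClosed {α β : Type*} {f : α → β}
    (hf : Function.Injective f) {R : α → α → Prop} {D : β → β → Prop}
    (hRD : ∀ x y, R x y ↔ D (f x) (f y)) :
    Set.BijOn (Set.image f) {Q | ∀ x ∈ Q, ∀ y, R y x → y ∈ Q}
      {M | M ⊆ Set.range f ∧ ∀ m ∈ M, ∀ m' ∈ Set.range f, D m' m → m' ∈ M} := by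
  refine ⟨fun Q hQ => ⟨Set.image_subset_range f Q, ?_⟩, (Set.image_injective.2 hf).injOn,
    fun M ⟨hMf, hM⟩ => ⟨f ⁻¹' M, ?_, Set.image_preimage_eq_of_subset hMf⟩⟩
  · rintro _ ⟨x, hx, rfl⟩ _ ⟨y, rfl⟩ hyx
    exact Set.mem_image_of_mem f (hQ x hx y ((hRD y x).2 hyx))
  · exact fun x hx y hyx => hM _ hx _ ⟨y, rfl⟩ ((hRD y x).1 hyx)

theorem isMulticx_and_shiftedMC_iff {k r a : ℕ} (hrk : r ≤ k) {M : Set (Fin k → ℕ)}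
    (hMS : M ⊆ {m | SupportedOn r m ∧ degM m ≤ a}) :
    IsMulticx M ∧ ShiftedMC r M ↔
      ∀ m ∈ M, ∀ m' ∈ {m | SupportedOn r m ∧ degM m ≤ a}, DominanceLE r m' m → m' ∈ M := by
  constructor
  · rintro ⟨hM, hS⟩ m hm m' ⟨hsupp', -⟩ hdom
    exact hS.mem_of_dominanceLE hrk hM hm (hMS hm).1 hsupp' hdom
  · intro hclosed
    refine ⟨fun m hm m' hle => hclosed m hm m' ⟨fun t ht => ?_, ?_⟩ (.of_le hle),
      fun m hm i j hij hjr hmi => hclosed m hm _ ⟨?_, ?_⟩ (.shiftMove hij hmi)⟩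
    · exact Nat.le_zero.1 ((hle t).trans_eq ((hMS hm).1 t ht))
    · exact (sum_le_sum fun t _ => hle t).trans (hMS hm).2
    · exact (hMS hm).1.shiftMove (lt_trans hij hjr) hjr
    · exact (degM_shiftMove hij.ne hmi).trans_le (hMS hm).2

theorem lam_bijection_orderIdeals_shiftedMulticomplexes_general (r a : ℕ) :
    Set.BijOn (fun Q : Set (NPath (r + a) a) => lamP r '' Q)
      {Q : Set (NPath (r + a) a) | IsOrderIdealP Q}
      {M : Set (Fin (r + a) → ℕ) |
        (∀ m ∈ M, SupportedOn r m ∧ degM m ≤ a) ∧ IsMulticx M ∧ ShiftedMC r M} := by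
  have hcodomain : {M : Set (Fin (r + a) → ℕ) |
      (∀ m ∈ M, SupportedOn r m ∧ degM m ≤ a) ∧ IsMulticx M ∧ ShiftedMC r M} =
      {M | M ⊆ Set.range (lamP r : NPath (r + a) a → _) ∧
        ∀ m ∈ M, ∀ m' ∈ Set.range (lamP r : NPath (r + a) a → _), DominanceLE r m' m → m' ∈ M} := by
    ext M
    rw [NPath.range_lamP]
    exact and_congr_right fun hM => isMulticx_and_shiftedMC_iff (Nat.le_add_right r a) hM
  rw [hcodomain]
  exact NPath.lamP_injective.bijOn_image_downClosed NPath.pathLe_iff_dominanceLE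

/-- (Proposition 3.2(b)) `Q ↦ λ(Q)` is a bijection from order ideals of
the lattice-path poset `𝓛_{r,a}` onto shifted multicomplexes on `W_r` of degree `≤ a`. -/
theorem lam_bijection_orderIdeals_shiftedMulticomplexes (r a : ℕ) (hr : 0 < r) (ha : 0 < a) :
    Set.BijOn (fun Q : Set (NPath (r + a) a) => lamP r '' Q)
      {Q : Set (NPath (r + a) a) | IsOrderIdealP Q}
      {M : Set (Fin (r + a) → ℕ) |
        (∀ m ∈ M, SupportedOn r m ∧ degM m ≤ a) ∧ IsMulticx M ∧ ShiftedMC r M} :=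
  lam_bijection_orderIdeals_shiftedMulticomplexes_general r a
end
end

section
/- For positive integers r and a, the map M ↦ φ̄(M) := {φ^a(m) : m ∈ M} is a bijection from the set of shifted multicomplexes on W_r consisting of monomials of degree at most a onto the set of shifted families of a-element subsets of [r+a]; its inverse sends a shifted family 𝒜 to {ψ(F) : F ∈ 𝒜}. -/
open Finset

noncomputable section

/-!
Read an `a`-subset `F` of `[r+a]` as the lattice path with north steps at `F`, and a monomial `m`
through its partial degrees `m_1 + ⋯ + m_i`: counting positions from `0`, the `i`-th east step
of `φ(m)` sits at position `m_1 + ⋯ + m_i + i - 1`. Hence `m'` has all its partial degrees at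
most those of `m` exactly when `φ(m')` has at least as many east steps as `φ(m)` in every initial
segment, so `φ` and `ψ` are mutually inverse isomorphisms between these two orders. A shifted
multicomplex is a down-set of the first order: from `m` above `m' ≠ m` one can step down by
`m ↦ w_{t+1} m / w_t` or `m ↦ m / w_t` without passing below `m'`. Likewise a shifted family is a
down-set of the second, through the exchanges `F ↦ F ∖ {u} ∪ {v}` with `u < v`. Hence
`M ↦ φ̄(M)` and `𝒜 ↦ ψ̄(𝒜)` carry down-sets to down-sets and are inverse to each other.
-/

theorem mem_of_descent {α : Type*} {S : Set α} {P : α → Prop} {y : α} (μ : α → ℕ)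
    (step : ∀ x ∈ S, P x → x = y ∨ ∃ z ∈ S, P z ∧ μ z < μ x) {x : α} (hx : x ∈ S)
    (hPx : P x) : y ∈ S := by
  induction hμ : μ x using Nat.strong_induction_on generalizing x with
  | _ n ih =>
    obtain rfl | ⟨z, hz, hPz, hlt⟩ := step x hx hPx
    · exact hx
    · exact ih _ (hμ ▸ hlt) hz hPz rfl

theorem forall_card_filter_lt_le_iff {e e' : ℕ → ℕ} (he : Monotone e) (he' : Monotone e')
    (n : ℕ) :
    (∀ x, #{i ∈ range n | e i < x} ≤ #{i ∈ range n | e' i < x}) ↔ ∀ i < n, e' i ≤ e i := by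
  refine ⟨fun h t ht => ?_, fun h x => card_le_card fun i hi => ?_⟩
  · by_contra! hlt
    have hlow : range (t + 1) ⊆ {i ∈ range n | e i < e t + 1} := fun i hi => by
      simp only [mem_range, mem_filter] at hi ⊢
      exact ⟨by omega, Nat.lt_succ_of_le (he (by omega))⟩
    have hhigh : {i ∈ range n | e' i < e t + 1} ⊆ range t := fun i hi => by
      simp only [mem_range, mem_filter] at hi ⊢
      by_contra! hti
      have := he' hti
      omega
    have := h (e t + 1)
    have := card_le_card hlow
    have := card_le_card hhigh
    simp only [card_range] at *
    omega
  · simp only [mem_filter, mem_range] at hi ⊢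
    exact ⟨hi.1, (h i hi.1).trans_lt hi.2⟩

theorem card_insert_erase_of_notMem {α : Type*} [DecidableEq α] {s : Finset α} {u v : α}
    (hu : u ∈ s) (hv : v ∉ s) : #(insert v (s.erase u)) = #s := by
  rw [card_insert_of_notMem fun h => hv (mem_of_mem_erase h), card_erase_add_one hu]

section PartialDeg

variable {k r : ℕ}

/-- `partialDeg m i = m_1 + ⋯ + m_i`, with the variables `w_1, w_2, …` at indices `0, 1, …`. -/
def partialDeg (m : Fin k → ℕ) (i : ℕ) : ℕ :=
  ∑ j ∈ univ.filter (fun j : Fin k => (j : ℕ) < i), m j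

@[simp]
theorem partialDeg_zero (m : Fin k → ℕ) : partialDeg m 0 = 0 := by
  simp [partialDeg]

theorem partialDeg_succ (m : Fin k → ℕ) (j : Fin k) :
    partialDeg m (j + 1) = partialDeg m j + m j := by
  rw [partialDeg, partialDeg, ← sum_filter_not_add_sum_filter _ (fun i : Fin k => i = j)]
  congr 1
  · congr 1
    ext i
    simp only [mem_filter, mem_univ, true_and, Fin.ext_iff]
    omega
  · rw [filter_filter, ← sum_singleton m j]
    congr 1
    ext i
    simp only [mem_filter, mem_univ, true_and, mem_singleton, Fin.ext_iff]
    omega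

theorem partialDeg_mono (m : Fin k → ℕ) : Monotone (partialDeg m) := fun _ _ h =>
  sum_le_sum_of_subset (monotone_filter_right _ fun _ _ hj => lt_of_lt_of_le hj h)

theorem partialDeg_le_degM (m : Fin k → ℕ) (i : ℕ) : partialDeg m i ≤ degM m :=
  sum_le_sum_of_subset (filter_subset _ _)

theorem partialDeg_le_partialDeg {m m' : Fin k → ℕ} (h : m' ≤ m) (i : ℕ) :
    partialDeg m' i ≤ partialDeg m i :=
  sum_le_sum fun j _ => h j

theorem partialDeg_add (m m' : Fin k → ℕ) (i : ℕ) :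
    partialDeg (m + m') i = partialDeg m i + partialDeg m' i :=
  sum_add_distrib

theorem partialDeg_single (c : Fin k) (n i : ℕ) :
    partialDeg (Pi.single c n) i = if (c : ℕ) < i then n else 0 := by
  simp [partialDeg, sum_pi_single']

theorem degM_eq_partialDeg {m : Fin k → ℕ} (hs : SupportedOn r m) {i : ℕ} (hi : r ≤ i) :
    degM m = partialDeg m i := by
  refine (sum_subset (subset_univ _) fun j _ hj => hs j ?_).symm
  simp only [mem_filter, mem_univ, true_and, not_lt] at hj
  omega

theorem eq_of_partialDeg_eq {m m' : Fin k → ℕ} (hs : SupportedOn r m) (hs' : SupportedOn r m')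
    (h : ∀ i ≤ r, partialDeg m i = partialDeg m' i) : m = m' := by
  funext j
  by_cases hj : (j : ℕ) < r
  · have := h (j + 1) hj
    rw [partialDeg_succ, partialDeg_succ, h j hj.le] at this
    omega
  · rw [hs j (not_lt.1 hj), hs' j (not_lt.1 hj)]

theorem shiftMove_add_single_s4 {m : Fin k → ℕ} {c d : Fin k} (hc : 0 < m c) (hcd : c ≠ d) :
    shiftMove m c d + Pi.single c 1 = m + Pi.single d 1 := by
  funext t
  by_cases htc : t = c
  · subst htc
    simp only [Pi.add_apply, shiftMove, if_pos, Pi.single_eq_same, Pi.single_eq_of_ne hcd,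
      add_zero]
    omega
  · by_cases htd : t = d
    · subst htd
      simp [shiftMove, htc]
    · simp [shiftMove, htc, htd]

theorem partialDeg_shiftMove {m : Fin k → ℕ} {c d : Fin k} (hc : 0 < m c) (hcd : c ≠ d)
    (i : ℕ) :
    partialDeg (shiftMove m c d) i + (if (c : ℕ) < i then 1 else 0) =
      partialDeg m i + if (d : ℕ) < i then 1 else 0 := by
  rw [← partialDeg_single, ← partialDeg_single, ← partialDeg_add, ← partialDeg_add,
    shiftMove_add_single_s4 hc hcd]

theorem partialDeg_sub_single {m : Fin k → ℕ} {c : Fin k} (hc : 0 < m c) (i : ℕ) :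
    partialDeg (m - Pi.single c 1) i + (if (c : ℕ) < i then 1 else 0) = partialDeg m i := by
  rw [← partialDeg_single, ← partialDeg_add, tsub_add_cancel_of_le]
  intro t
  by_cases htc : t = c
  · subst htc
    rw [Pi.single_eq_same]
    exact hc
  · simp [htc]

end PartialDeg

section EastCount

variable {k : ℕ}

/-- The number of east steps among the first `x` steps of the path whose north steps are at the
positions in `F`. -/
def eastCount (F : Finset (Fin k)) (x : ℕ) : ℕ :=
  #(Fᶜ.filter fun j : Fin k => (j : ℕ) < x)

theorem xcoordS_eq_eastCount (F : Finset (Fin k)) (p : Fin k) :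
    xcoordS F p = eastCount F p := by
  unfold xcoordS eastCount
  congr 1
  ext j
  simp only [mem_filter, mem_univ, mem_compl, true_and, Fin.lt_def]
  tauto

@[simp]
theorem eastCount_zero (F : Finset (Fin k)) : eastCount F 0 = 0 := by
  simp [eastCount]

theorem eastCount_mono (F : Finset (Fin k)) : Monotone (eastCount F) := fun _ _ h =>
  card_le_card (monotone_filter_right _ fun _ _ hj => lt_of_lt_of_le hj h)

theorem eastCount_succ (F : Finset (Fin k)) (p : Fin k) :
    eastCount F (p + 1) = eastCount F p + if p ∈ F then 0 else 1 := by
  have hp : (if p ∈ F then 0 else 1) = if p ∈ Fᶜ then 1 else 0 := by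
    by_cases p ∈ F <;> simp [*]
  simp only [eastCount, card_filter]
  rw [hp, ← sum_ite_eq' Fᶜ p fun _ => 1, ← sum_add_distrib]
  refine sum_congr rfl fun j hj => ?_
  rw [mem_compl] at hj
  have : j = p ↔ (j : ℕ) = p := Fin.ext_iff
  split_ifs <;> simp_all <;> omega

theorem eastCount_of_le (F : Finset (Fin k)) {x : ℕ} (hx : k ≤ x) : eastCount F x = k - #F := by
  rw [eastCount, filter_true_of_mem fun j _ => j.isLt.trans_le hx, card_compl, Fintype.card_fin]

theorem card_filter_lt_add_eastCount (F : Finset (Fin k)) (p : Fin k) :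
    #{f ∈ F | f < p} + eastCount F p = p := by
  have h := card_filter_add_card_filter_not (s := Iio p) (· ∈ F)
  rw [Fin.card_Iio] at h
  refine Eq.trans ?_ h
  rw [eastCount]
  congr 2 <;> ext j <;> simp only [mem_filter, mem_Iio, mem_compl, Fin.lt_def] <;> tauto

theorem eq_of_eastCount_eq {F G : Finset (Fin k)} (h : ∀ x, eastCount F x = eastCount G x) :
    F = G := by
  ext p
  have := eastCount_succ F p
  have := eastCount_succ G p
  have := h p
  have := h (p + 1)
  split_ifs at * <;> simp_all

theorem eastCount_exchange {F : Finset (Fin k)} {u v : Fin k} (hu : u ∈ F) (hv : v ∉ F)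
    (x : ℕ) :
    eastCount (insert v (F.erase u)) x + (if (v : ℕ) < x then 1 else 0) =
      eastCount F x + if (u : ℕ) < x then 1 else 0 := by
  have huv : u ≠ v := by rintro rfl; exact hv hu
  have key : insert v (insert v (F.erase u))ᶜ = insert u Fᶜ := by
    ext j
    by_cases hju : j = u <;> by_cases hjv : j = v <;> simp_all
  have := congrArg (fun s : Finset (Fin k) => ∑ j ∈ s, if (j : ℕ) < x then 1 else 0) key
  rwa [sum_insert (by simp), sum_insert (by simpa), add_comm, add_comm _ (∑ _ ∈ _, _),
    ← card_filter, ← card_filter] at this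

theorem eastCount_le_eastCount_exchange {F : Finset (Fin k)} {u v : Fin k} (hu : u ∈ F)
    (hv : v ∉ F) (huv : u < v) (x : ℕ) : eastCount F x ≤ eastCount (insert v (F.erase u)) x := by
  have := eastCount_exchange hu hv x
  rw [Fin.lt_def] at huv
  split_ifs at this <;> omega

end EastCount

section Descent

variable {k r : ℕ}

theorem exists_partialDeg_succ_lt (hrk : r ≤ k) {m z : Fin k → ℕ} (hs : SupportedOn r m)
    (hz : SupportedOn r z) (hle : ∀ i ≤ r, partialDeg m i ≤ partialDeg z i) (hne : m ≠ z) :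
    ∃ t : Fin k, (t : ℕ) < r ∧ 0 < z t ∧ partialDeg m (t + 1) < partialDeg z (t + 1) := by
  have hex : ∃ i, i ≤ r ∧ partialDeg m i < partialDeg z i := by
    by_contra! h
    exact hne (eq_of_partialDeg_eq hs hz fun i hi => (hle i hi).antisymm (h i hi))
  obtain ⟨hr, hlt⟩ := Nat.find_spec hex
  obtain ⟨t, ht⟩ : ∃ t, Nat.find hex = t + 1 :=
    Nat.exists_eq_succ_of_ne_zero fun h => by simp [h] at hlt
  have heq : partialDeg m t = partialDeg z t :=
    (hle t (by omega)).antisymm (not_lt.1 fun h => Nat.find_min hex (by omega) ⟨by omega, h⟩)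
  rw [ht] at hr hlt
  refine ⟨⟨t, by omega⟩, hr, ?_, hlt⟩
  have := partialDeg_succ m ⟨t, by omega⟩
  have := partialDeg_succ z ⟨t, by omega⟩
  simp only at *
  omega

theorem ShiftedMC.exists_mem_partialDeg_add_ite_eq {M : Set (Fin k → ℕ)} (hsh : ShiftedMC r M)
    (hM : IsMulticx M) (hrk : r ≤ k) {z : Fin k → ℕ} (hz : z ∈ M) {t : Fin k}
    (ht : (t : ℕ) < r) (hzt : 0 < z t) :
    ∃ z' ∈ M, ∀ i ≤ r, partialDeg z' i + (if i = t + 1 then 1 else 0) = partialDeg z i := by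
  by_cases htr : (t : ℕ) + 1 < r
  · let d : Fin k := ⟨t + 1, by omega⟩
    refine ⟨shiftMove z t d, hsh z hz t d (by simp [Fin.lt_def, d]) htr hzt, fun i _ => ?_⟩
    have := partialDeg_shiftMove hzt (d := d) (by simp [Fin.ext_iff, d]) i
    have hd : (d : ℕ) = t + 1 := rfl
    split_ifs at this ⊢ <;> omega
  · refine ⟨z - Pi.single t 1, hM z hz _ fun _ => tsub_le_self, fun i hi => ?_⟩
    have := partialDeg_sub_single hzt i
    split_ifs at this ⊢ <;> omega

theorem ShiftedMC.mem_of_partialDeg_le {M : Set (Fin k → ℕ)} (hsh : ShiftedMC r M)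
    (hM : IsMulticx M) (hrk : r ≤ k) (hsupp : ∀ z ∈ M, SupportedOn r z) {z m : Fin k → ℕ}
    (hz : z ∈ M) (hs : SupportedOn r m) (hle : ∀ i ≤ r, partialDeg m i ≤ partialDeg z i) :
    m ∈ M := by
  refine mem_of_descent (P := fun z => ∀ i ≤ r, partialDeg m i ≤ partialDeg z i)
    (fun z => ∑ i ∈ range (r + 1), partialDeg z i) (fun z hz hle => ?_) hz hle
  refine or_iff_not_imp_left.2 fun hne => ?_
  obtain ⟨t, ht, hzt, hlt⟩ := exists_partialDeg_succ_lt hrk hs (hsupp z hz) hle (Ne.symm hne)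
  obtain ⟨z', hz', hz'z⟩ := hsh.exists_mem_partialDeg_add_ite_eq hM hrk hz ht hzt
  refine ⟨z', hz', fun i hi => ?_, sum_lt_sum (fun i hi => ?_) ⟨t + 1, ?_, ?_⟩⟩
  · have := hz'z i hi
    have := hle i hi
    split_ifs at * with hit
    · subst hit
      omega
    · omega
  · have := hz'z i (Nat.lt_succ_iff.1 (mem_range.1 hi))
    omega
  · simpa using ht
  · have := hz'z (t + 1) ht
    simp only [if_true] at this
    omega

theorem exists_notMem_eastCount_eq {F : Finset (Fin k)} {x y : ℕ}
    (h : eastCount F x < eastCount F y) :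
    ∃ v : Fin k, v ∉ F ∧ x ≤ v ∧ eastCount F v = eastCount F x := by
  have hex : ∃ z, eastCount F x < eastCount F z := ⟨y, h⟩
  obtain ⟨v, hv⟩ : ∃ v, Nat.find hex = v + 1 :=
    Nat.exists_eq_succ_of_ne_zero fun h0 => by simpa [h0] using Nat.find_spec hex
  have hspec := Nat.find_spec hex
  rw [hv] at hspec
  have hxv : x ≤ v := by
    by_contra!
    exact absurd hspec (not_lt.2 (eastCount_mono F (by omega)))
  have hveq : eastCount F v = eastCount F x :=
    (not_lt.1 (Nat.find_min hex (by omega))).antisymm (eastCount_mono F hxv)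
  have hvk : v < k := by
    by_contra! hkv
    rw [eastCount_of_le F (by omega : k ≤ v + 1), ← eastCount_of_le F hkv] at hspec
    omega
  refine ⟨⟨v, hvk⟩, fun hvF => ?_, hxv, hveq⟩
  have := eastCount_succ F ⟨v, hvk⟩
  simp only [if_pos hvF] at this
  omega

theorem exists_mem_eastCount_succ_lt {G F : Finset (Fin k)} (hcard : #G = #F)
    (hle : ∀ x, eastCount G x ≤ eastCount F x) (hne : G ≠ F) :
    ∃ u ∈ G, eastCount G (u + 1) < eastCount F (u + 1) := by
  have hex : ∃ x, eastCount G x < eastCount F x := by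
    by_contra! h
    exact hne (eq_of_eastCount_eq fun x => (hle x).antisymm (h x))
  obtain ⟨y, hy⟩ : ∃ y, Nat.find hex = y + 1 :=
    Nat.exists_eq_succ_of_ne_zero fun h0 => by simpa [h0] using Nat.find_spec hex
  have hlt : eastCount G (y + 1) < eastCount F (y + 1) := hy ▸ Nat.find_spec hex
  have heq : eastCount G y = eastCount F y :=
    (hle y).antisymm (not_lt.1 (Nat.find_min hex (by omega)))
  have hyk : y < k := by
    by_contra! hky
    rw [eastCount_of_le G (by omega), eastCount_of_le F (by omega), hcard] at hlt
    exact lt_irrefl _ hlt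
  refine ⟨⟨y, hyk⟩, ?_, hlt⟩
  have := eastCount_succ G ⟨y, hyk⟩
  have := eastCount_succ F ⟨y, hyk⟩
  by_contra hu
  simp only [if_neg hu] at *
  split_ifs at * <;> omega

theorem exists_exchange_of_eastCount_le {G F : Finset (Fin k)} (hcard : #G = #F)
    (hle : ∀ x, eastCount G x ≤ eastCount F x) (hne : G ≠ F) :
    ∃ u ∈ G, ∃ v ∉ G, u < v ∧ ∀ x, eastCount (insert v (G.erase u)) x ≤ eastCount F x := by
  obtain ⟨u, hu, hlt⟩ := exists_mem_eastCount_succ_lt hcard hle hne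
  have hGk : eastCount G (u + 1) < eastCount G k := by
    rw [eastCount_of_le G le_rfl, hcard, ← eastCount_of_le F le_rfl]
    exact hlt.trans_le (eastCount_mono F (by omega))
  -- `G` has no east step in `[u + 1, v)`, so it has strictly fewer east steps than `F` on `(u, v]`
  obtain ⟨v, hv, huv, hveq⟩ := exists_notMem_eastCount_eq hGk
  refine ⟨u, hu, v, hv, Fin.lt_def.2 (by omega), fun x => ?_⟩
  have hexch := eastCount_exchange hu hv x
  have := hle x
  split_ifs at hexch with hvx hux hux
  · omega
  · omega
  · have := eastCount_mono G (not_lt.1 hvx)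
    have := eastCount_mono F (show (u : ℕ) + 1 ≤ x by omega)
    omega
  · omega

theorem ShiftedCplx.mem_of_eastCount_le {A : Set (Finset (Fin k))} (hA : ShiftedCplx A)
    {G F : Finset (Fin k)} (hG : G ∈ A) (hcard : #G = #F)
    (hle : ∀ x, eastCount G x ≤ eastCount F x) : F ∈ A := by
  refine mem_of_descent (P := fun G => #G = #F ∧ ∀ x, eastCount G x ≤ eastCount F x)
    (fun G => ∑ x ∈ range (k + 1), (eastCount F x - eastCount G x)) (fun G hG hGF => ?_) hG
    ⟨hcard, hle⟩
  refine or_iff_not_imp_left.2 fun hne => ?_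
  obtain ⟨u, hu, v, hv, huv, hle'⟩ := exists_exchange_of_eastCount_le hGF.1 hGF.2 hne
  refine ⟨_, hA G hG u v huv hu hv, ⟨?_, hle'⟩, sum_lt_sum (fun x _ => ?_) ⟨u + 1, ?_, ?_⟩⟩
  · rw [card_insert_erase_of_notMem hu hv, hGF.1]
  · have := eastCount_le_eastCount_exchange hu hv huv x
    omega
  · simp
  · have := eastCount_exchange hu hv (u + 1)
    have := hle' (u + 1)
    rw [Fin.lt_def] at huv
    split_ifs at * <;> omega

end Descent

section PhiPsi

variable {k r a : ℕ}

/-- The position (counted from `0`) of the `(i+1)`-st east step of the path `φ(m)`. -/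
def eastPos (m : Fin k → ℕ) (i : ℕ) : ℕ :=
  partialDeg m (i + 1) + i

theorem eastPos_strictMono (m : Fin k → ℕ) : StrictMono (eastPos m) :=
  strictMono_nat_of_lt_succ fun i => by
    have := partialDeg_mono m (by omega : i + 1 ≤ i + 1 + 1)
    unfold eastPos
    omega

theorem eastPos_lt {m : Fin k → ℕ} (hd : degM m ≤ a) {i : ℕ} (hi : i < r) :
    eastPos m i < r + a := by
  have := partialDeg_le_degM m (i + 1)
  unfold eastPos
  omega

theorem mem_phiM_iff {m : Fin k → ℕ} {p : Fin k} :
    p ∈ phiM r m ↔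
      (∃ i < r, partialDeg m i + i ≤ p ∧ (p : ℕ) < eastPos m i) ∨ degM m + r ≤ p := by
  simp only [phiM, mem_filter, mem_univ, true_and, eastPos]
  refine or_congr_left ⟨fun ⟨i, hir, h1, h2⟩ => ⟨i, hir, h1, ?_⟩,
    fun ⟨i, hir, h1, h2⟩ => ⟨⟨i, by omega⟩, hir, h1, ?_⟩⟩
  · rw [partialDeg_succ]
    exact h2
  · have := partialDeg_succ m ⟨i, by omega⟩
    exact this ▸ h2

theorem notMem_phiM_iff {m : Fin k → ℕ} (hs : SupportedOn r m) {p : Fin k} :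
    p ∉ phiM r m ↔ ∃ i < r, (p : ℕ) = eastPos m i := by
  rw [mem_phiM_iff]
  constructor
  · intro hp
    push Not at hp
    have hex : ∃ i, (p : ℕ) ≤ eastPos m i := ⟨p, by unfold eastPos; omega⟩
    have hi := Nat.find_spec hex
    have hlow : partialDeg m (Nat.find hex) + Nat.find hex ≤ p := by
      rcases Nat.eq_zero_or_pos (Nat.find hex) with h | h
      · simp [h]
      · have := Nat.find_min hex (Nat.sub_one_lt_of_lt h)
        rw [eastPos, Nat.sub_add_cancel h] at this
        omega
    by_cases hir : Nat.find hex < r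
    · exact ⟨_, hir, le_antisymm hi (hp.1 _ hir hlow)⟩
    · have := partialDeg_mono m (not_lt.1 hir)
      rw [← degM_eq_partialDeg hs le_rfl] at this
      omega
  · rintro ⟨i, hi, hpi⟩ (⟨j, hj, h1, h2⟩ | h)
    · have hij : i < j := (eastPos_strictMono m).lt_iff_lt.1 (hpi ▸ h2)
      have := partialDeg_mono m (show i + 1 ≤ j from hij)
      unfold eastPos at hpi
      omega
    · have := partialDeg_le_degM m (i + 1)
      unfold eastPos at hpi
      omega

theorem eastCount_phiM {m : Fin (r + a) → ℕ} (hs : SupportedOn r m) (hd : degM m ≤ a)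
    (x : ℕ) : eastCount (phiM r m) x = #{i ∈ range r | eastPos m i < x} := by
  symm
  refine card_bij (fun i hi => ⟨eastPos m i, eastPos_lt hd (mem_range.1 (mem_filter.1 hi).1)⟩)
    (fun i hi => ?_) (fun i _ j _ h => (eastPos_strictMono m).injective (congrArg Fin.val h))
    (fun p hp => ?_)
  · simp only [mem_filter, mem_range, mem_compl] at hi ⊢
    exact ⟨(notMem_phiM_iff hs).2 ⟨i, hi.1, rfl⟩, hi.2⟩
  · simp only [mem_filter, mem_compl] at hp
    obtain ⟨i, hi, hpi⟩ := (notMem_phiM_iff hs).1 hp.1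
    exact ⟨i, mem_filter.2 ⟨mem_range.2 hi, hpi ▸ hp.2⟩, Fin.ext hpi.symm⟩

theorem card_phiM {m : Fin (r + a) → ℕ} (hs : SupportedOn r m) (hd : degM m ≤ a) :
    #(phiM r m) = a := by
  have h := eastCount_phiM hs hd (r + a)
  rw [eastCount_of_le _ le_rfl, filter_true_of_mem fun i hi => eastPos_lt hd (mem_range.1 hi),
    card_range] at h
  have := card_le_univ (phiM r m)
  rw [Fintype.card_fin] at this
  omega

theorem partialDeg_le_iff_eastCount_phiM_le {m m' : Fin (r + a) → ℕ} (hs : SupportedOn r m)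
    (hd : degM m ≤ a) (hs' : SupportedOn r m') (hd' : degM m' ≤ a) :
    (∀ i ≤ r, partialDeg m' i ≤ partialDeg m i) ↔
      ∀ x, eastCount (phiM r m) x ≤ eastCount (phiM r m') x := by
  simp only [eastCount_phiM hs hd, eastCount_phiM hs' hd']
  rw [forall_card_filter_lt_le_iff (eastPos_strictMono m).monotone
    (eastPos_strictMono m').monotone]
  unfold eastPos
  refine ⟨fun h i hi => ?_, fun h i hi => ?_⟩
  · have := h (i + 1) hi
    omega
  · rcases i with _ | i
    · simp
    · have := h i hi
      omega

theorem psiM_supportedOn (F : Finset (Fin k)) : SupportedOn r (psiM r F) :=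
  fun _ hi => if_neg (not_lt.2 hi)

theorem partialDeg_psiM (F : Finset (Fin (r + a))) {i : ℕ} (hi : i ≤ r) :
    partialDeg (psiM r F) i = #(F.filter fun f : Fin (r + a) => eastCount F f < i) := by
  induction i with
  | zero => simp
  | succ i ih =>
    have h := partialDeg_succ (psiM r F) ⟨i, by omega⟩
    simp only [psiM, if_pos (show i < r by omega), xcoordS_eq_eastCount] at h
    rw [h, ih (by omega)]
    rw [card_filter, card_filter, card_filter, ← sum_add_distrib]
    refine sum_congr rfl fun f _ => ?_
    split_ifs <;> omega

theorem degM_psiM_le (F : Finset (Fin (r + a))) : degM (psiM r F) ≤ #F := by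
  rw [degM_eq_partialDeg (psiM_supportedOn F) le_rfl, partialDeg_psiM F le_rfl]
  exact card_filter_le _ _

theorem eastPos_psiM_eastCount {F : Finset (Fin (r + a))} (hF : #F = a) {p : Fin (r + a)}
    (hp : p ∉ F) : eastCount F p < r ∧ eastPos (psiM r F) (eastCount F p) = p := by
  have hsucc := eastCount_succ F p
  rw [if_neg hp] at hsucc
  have hlt : eastCount F p < r := by
    have := eastCount_mono F (show (p : ℕ) + 1 ≤ r + a from p.isLt)
    rw [eastCount_of_le F le_rfl, hF] at this
    omega
  refine ⟨hlt, Eq.trans ?_ (card_filter_lt_add_eastCount F p)⟩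
  rw [eastPos, partialDeg_psiM F hlt]
  congr 2
  refine filter_congr fun f hf => ⟨fun h => ?_, fun h => ?_⟩
  · by_contra hfp
    have hpf : (p : ℕ) + 1 ≤ f := by
      rw [not_lt, Fin.le_iff_val_le_val] at hfp
      have : f ≠ p := by rintro rfl; exact hp hf
      omega
    have := eastCount_mono F hpf
    omega
  · have := eastCount_mono F (Fin.lt_def.1 h).le
    omega

theorem phiM_psiM {F : Finset (Fin (r + a))} (hF : #F = a) : phiM r (psiM r F) = F := by
  refine eq_of_subset_of_card_le (fun p hp => ?_) ?_
  · by_contra hpF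
    obtain ⟨hlt, hpos⟩ := eastPos_psiM_eastCount hF hpF
    exact (notMem_phiM_iff (psiM_supportedOn F)).2 ⟨_, hlt, hpos.symm⟩ hp
  · rw [card_phiM (psiM_supportedOn F) ((degM_psiM_le F).trans hF.le), hF]

theorem psiM_phiM {m : Fin (r + a) → ℕ} (hs : SupportedOn r m) (hd : degM m ≤ a) :
    psiM r (phiM r m) = m := by
  refine eq_of_partialDeg_eq (psiM_supportedOn _) hs fun i hi => ?_
  rcases i with _ | i
  · simp
  let p : Fin (r + a) := ⟨eastPos m i, eastPos_lt hd hi⟩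
  have hp : p ∉ phiM r m := (notMem_phiM_iff hs).2 ⟨i, hi, rfl⟩
  have hcount : eastCount (phiM r m) p = i := by
    rw [eastCount_phiM hs hd, ← card_range i]
    congr 1
    ext j
    simp only [mem_filter, mem_range, p, (eastPos_strictMono m).lt_iff_lt]
    omega
  have := (eastPos_psiM_eastCount (card_phiM hs hd) hp).2
  rw [hcount] at this
  have hpval : (p : ℕ) = eastPos m i := rfl
  unfold eastPos at this hpval
  omega

end PhiPsi

def shiftedMulticomplexes (r a : ℕ) : Set (Set (Fin (r + a) → ℕ)) :=
  {M | (∀ m ∈ M, SupportedOn r m ∧ degM m ≤ a) ∧ IsMulticx M ∧ ShiftedMC r M}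

def shiftedFamilies (r a : ℕ) : Set (Set (Finset (Fin (r + a)))) :=
  {A | (∀ F ∈ A, #F = a) ∧ ShiftedCplx A}

section Correspondence

variable {r a : ℕ}

theorem image_psiM_image_phiM {M : Set (Fin (r + a) → ℕ)}
    (hMa : ∀ m ∈ M, SupportedOn r m ∧ degM m ≤ a) : psiM r '' (phiM r '' M) = M := by
  rw [Set.image_image, Set.image_congr fun m hm => psiM_phiM (hMa m hm).1 (hMa m hm).2,
    Set.image_id']

theorem image_phiM_image_psiM {A : Set (Finset (Fin (r + a)))} (hAa : ∀ F ∈ A, #F = a) :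
    phiM r '' (psiM r '' A) = A := by
  rw [Set.image_image, Set.image_congr fun F hF => phiM_psiM (hAa F hF), Set.image_id']

theorem mem_image_phiM_of_eastCount_le {M : Set (Fin (r + a) → ℕ)}
    (hMa : ∀ m ∈ M, SupportedOn r m ∧ degM m ≤ a) (hM : IsMulticx M) (hsh : ShiftedMC r M)
    {m : Fin (r + a) → ℕ} (hm : m ∈ M) {G : Finset (Fin (r + a))} (hG : #G = a)
    (hle : ∀ x, eastCount (phiM r m) x ≤ eastCount G x) : G ∈ phiM r '' M := by
  refine ⟨psiM r G, hsh.mem_of_partialDeg_le hM (Nat.le_add_right r a)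
    (fun z hz => (hMa z hz).1) hm (psiM_supportedOn G) ?_, phiM_psiM hG⟩
  rwa [partialDeg_le_iff_eastCount_phiM_le (hMa m hm).1 (hMa m hm).2 (psiM_supportedOn G)
    ((degM_psiM_le G).trans hG.le), phiM_psiM hG]

theorem mem_image_psiM_of_partialDeg_le {A : Set (Finset (Fin (r + a)))}
    (hAa : ∀ F ∈ A, #F = a) (hA : ShiftedCplx A) {G : Finset (Fin (r + a))} (hG : G ∈ A)
    {m : Fin (r + a) → ℕ} (hs : SupportedOn r m)
    (hle : ∀ i ≤ r, partialDeg m i ≤ partialDeg (psiM r G) i) : m ∈ psiM r '' A := by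
  have hGd : degM (psiM r G) ≤ a := (degM_psiM_le G).trans (hAa G hG).le
  have hd : degM m ≤ a := by
    rw [degM_eq_partialDeg hs le_rfl]
    rw [degM_eq_partialDeg (psiM_supportedOn G) le_rfl] at hGd
    exact (hle r le_rfl).trans hGd
  refine ⟨phiM r m, hA.mem_of_eastCount_le hG ((hAa G hG).trans (card_phiM hs hd).symm) ?_,
    psiM_phiM hs hd⟩
  rw [← phiM_psiM (hAa G hG)]
  exact (partialDeg_le_iff_eastCount_phiM_le (psiM_supportedOn G) hGd hs hd).1 hle

theorem invOn_image_psiM_image_phiM :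
    Set.InvOn (fun A => psiM r '' A) (fun M => phiM r '' M) (shiftedMulticomplexes r a)
      (shiftedFamilies r a) :=
  ⟨fun _ hM => image_psiM_image_phiM hM.1, fun _ hA => image_phiM_image_psiM hA.1⟩

theorem mapsTo_image_phiM :
    Set.MapsTo (fun M => phiM r '' M) (shiftedMulticomplexes r a) (shiftedFamilies r a) := by
  rintro M ⟨hMa, hM, hsh⟩
  refine ⟨?_, ?_⟩
  · rintro _ ⟨m, hm, rfl⟩
    exact card_phiM (hMa m hm).1 (hMa m hm).2
  · rintro _ ⟨m, hm, rfl⟩ u v huv hu hv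
    refine mem_image_phiM_of_eastCount_le hMa hM hsh hm ?_
      (eastCount_le_eastCount_exchange hu hv huv)
    rw [card_insert_erase_of_notMem hu hv, card_phiM (hMa m hm).1 (hMa m hm).2]

theorem mapsTo_image_psiM :
    Set.MapsTo (fun A => psiM r '' A) (shiftedFamilies r a) (shiftedMulticomplexes r a) := by
  rintro A ⟨hAa, hA⟩
  refine ⟨?_, ?_, ?_⟩
  · rintro _ ⟨G, hG, rfl⟩
    exact ⟨psiM_supportedOn G, (degM_psiM_le G).trans (hAa G hG).le⟩
  · rintro _ ⟨G, hG, rfl⟩ m hm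
    refine mem_image_psiM_of_partialDeg_le hAa hA hG (fun i hi => ?_)
      fun i _ => partialDeg_le_partialDeg hm i
    simpa [psiM_supportedOn G i hi] using hm i
  · rintro _ ⟨G, hG, rfl⟩ c d hcd hdr hc
    refine mem_image_psiM_of_partialDeg_le hAa hA hG (fun i hi => ?_) fun i _ => ?_
    · have hic : i ≠ c := by rintro rfl; rw [Fin.lt_def] at hcd; omega
      have hid : i ≠ d := by rintro rfl; omega
      simp only [shiftMove, if_neg hic, if_neg hid]
      exact psiM_supportedOn G i hi
    · have := partialDeg_shiftMove hc hcd.ne i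
      rw [Fin.lt_def] at hcd
      split_ifs at this <;> omega

end Correspondence

theorem phi_bijection_shiftedMulticomplexes_shiftedFamilies_general (r a : ℕ) :
    Set.BijOn (fun M : Set (Fin (r + a) → ℕ) => phiM r '' M)
      {M : Set (Fin (r + a) → ℕ) |
        (∀ m ∈ M, SupportedOn r m ∧ degM m ≤ a) ∧ IsMulticx M ∧ ShiftedMC r M}
      {A : Set (Finset (Fin (r + a))) | (∀ F ∈ A, F.card = a) ∧ ShiftedCplx A} ∧
    Set.InvOn (fun A : Set (Finset (Fin (r + a))) => psiM r '' A)
      (fun M : Set (Fin (r + a) → ℕ) => phiM r '' M)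
      {M : Set (Fin (r + a) → ℕ) |
        (∀ m ∈ M, SupportedOn r m ∧ degM m ≤ a) ∧ IsMulticx M ∧ ShiftedMC r M}
      {A : Set (Finset (Fin (r + a))) | (∀ F ∈ A, F.card = a) ∧ ShiftedCplx A} := by
  exact ⟨invOn_image_psiM_image_phiM.bijOn mapsTo_image_phiM mapsTo_image_psiM,
    invOn_image_psiM_image_phiM⟩

/-- (Proposition 3.3(a), BFS correspondence) `M ↦ φ̄(M) = {φ^a(m) : m ∈ M}`
is a bijection from shifted multicomplexes on `W_r` of degree `≤ a` onto shifted families of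
`a`-subsets of `[r+a]`, with inverse `𝒜 ↦ {ψ(F) : F ∈ 𝒜}`. -/
theorem phi_bijection_shiftedMulticomplexes_shiftedFamilies (r a : ℕ) (hr : 0 < r) (ha : 0 < a) :
    Set.BijOn (fun M : Set (Fin (r + a) → ℕ) => phiM r '' M)
      {M : Set (Fin (r + a) → ℕ) |
        (∀ m ∈ M, SupportedOn r m ∧ degM m ≤ a) ∧ IsMulticx M ∧ ShiftedMC r M}
      {A : Set (Finset (Fin (r + a))) | (∀ F ∈ A, F.card = a) ∧ ShiftedCplx A} ∧
    Set.InvOn (fun A : Set (Finset (Fin (r + a))) => psiM r '' A)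
      (fun M : Set (Fin (r + a) → ℕ) => phiM r '' M)
      {M : Set (Fin (r + a) → ℕ) |
        (∀ m ∈ M, SupportedOn r m ∧ degM m ≤ a) ∧ IsMulticx M ∧ ShiftedMC r M}
      {A : Set (Finset (Fin (r + a))) | (∀ F ∈ A, F.card = a) ∧ ShiftedCplx A} :=
  phi_bijection_shiftedMulticomplexes_shiftedFamilies_general r a
end
end

section
/- Let Δ be a shifted simplicial complex of dimension d−1 on [n] with h-triangle (h_{i,j})_{0≤j≤i≤d}. Then for all 0 ≤ j ≤ i ≤ d, h_{i,j} equals the number of facets F of Δ with |F| = i and |σ(F)| = i − j. -/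
open Finset

noncomputable section

/-!
In a shifted complex, every face `G` of the pure skeleton `Δ^[c-1]` is `F \ S` for a unique face
`F` of size `c` and a unique `S ⊆ σ(F)` of size `c - |G|`: pushing the vertices of `F \ G` upwards
as far as shiftedness allows turns them into a terminal segment of `F`, and two such pieces of equal
size coincide. Hence `f_{i-1}(Δ^[c-1]) = ∑_F C(|σ(F)|, c - i)`, and binomial inversion turns this
into `h̃_{c,j} = #{F : |F| = c, |σ(F)| = c - j}`. Summing over `j` counts the faces `G` of size
`i + 1` with `|σ(G)| > i - j`; removing the vertex `n - (i - j)` from such a `G` is a bijection onto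
the faces of size `i` with `|σ(F)| = i - j` that are not facets, by shiftedness again.
-/

theorem Int.alternating_sum_range_choose_of_le {m j : ℕ} (h : m ≤ j) :
    ∑ k ∈ Finset.range (j + 1), ((-1) ^ k * m.choose k : ℤ) = if m = 0 then 1 else 0 := by
  cases m with
  | zero => simp [sum_range_succ']
  | succ m =>
    rw [Int.alternating_sum_range_choose_eq_choose, Nat.choose_eq_zero_of_lt (by omega)]
    simp

theorem sum_alternating_choose_mul_choose {c j s : ℕ} (hj : j ≤ c) (hs : s ≤ c) :
    ∑ i ∈ range (j + 1),
        (-1 : ℤ) ^ (j - i) * ((c - i).choose (j - i) : ℤ) * (s.choose (c - i) : ℤ)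
      = if s = c - j then 1 else 0 := by
  obtain ⟨a, rfl⟩ : ∃ a, c = a + j := ⟨c - j, by omega⟩
  have hterm : ∀ i ∈ range (j + 1),
      (-1 : ℤ) ^ (j - i) * ((a + j - i).choose (j - i) : ℤ) * (s.choose (a + j - i) : ℤ)
        = (s.choose a : ℤ) * ((-1) ^ (j - i) * ((s - a).choose (j - i) : ℤ)) := by
    intro i hi
    rw [show a + j - i = a + (j - i) by simp at hi; omega]
    generalize j - i = k
    rw [mul_assoc, ← Nat.cast_mul, ← Nat.choose_symm_add, Nat.mul_comm,
      Nat.choose_mul (Nat.le_add_right a k), Nat.add_sub_cancel_left]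
    push_cast
    ring
  have hreflect := sum_range_reflect (fun k => (-1 : ℤ) ^ k * ((s - a).choose k : ℤ)) (j + 1)
  simp only [add_tsub_cancel_right] at hreflect
  rw [sum_congr rfl hterm, ← mul_sum, hreflect, Int.alternating_sum_range_choose_of_le (by omega)]
  rcases lt_trichotomy s a with h | rfl | h
  · simp [Nat.choose_eq_zero_of_lt h, h.ne]
  · simp
  · simp [show s - a ≠ 0 by omega, h.ne']

theorem Finset.eq_of_card_eq_of_forall_le_mem {α : Type*} [LinearOrder α] {s t : Finset α}
    (hs : ∀ a ∈ s, ∀ b ∈ t, a ≤ b → b ∈ s) (ht : ∀ a ∈ t, ∀ b ∈ s, a ≤ b → b ∈ t)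
    (h : #s = #t) : s = t := by
  have hcomp : s ⊆ t ∨ t ⊆ s := by
    by_contra! ⟨hst, hts⟩
    obtain ⟨a, has, hat⟩ := not_subset.1 hst
    obtain ⟨b, hbt, hbs⟩ := not_subset.1 hts
    rcases le_total a b with hab | hba
    · exact hbs (hs a has b hbt hab)
    · exact hat (ht b hbt a has hba)
  rcases hcomp with hst | hts
  · exact eq_of_subset_of_card_le hst h.ge
  · exact (eq_of_subset_of_card_le hts h.le).symm

theorem Finset.sum_range_card_filter_eq_sub {α : Type*} {s : Finset α} {f : α → ℕ} {c j : ℕ}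
    (hj : j ≤ c) (hf : ∀ x ∈ s, f x ≤ c) :
    ∑ ℓ ∈ range (j + 1), #{x ∈ s | f x = c - ℓ} = #{x ∈ s | c - j ≤ f x} := by
  classical
  rw [card_eq_sum_card_fiberwise (f := fun x => c - f x) (t := range (j + 1))]
  · refine sum_congr rfl fun ℓ hℓ => ?_
    have hℓ : ℓ ≤ j := Nat.lt_succ_iff.1 (mem_range.1 hℓ)
    rw [filter_filter]
    congr 1
    refine filter_congr fun x hx => ?_
    have := hf x hx
    omega
  · intro x hx
    have := hf x (mem_filter.1 hx).1
    have := (mem_filter.1 hx).2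
    simp only [coe_range, Set.mem_Iio]
    omega

open Classical in
def facesOfCard {n : ℕ} (Δ : Set (Finset (Fin n))) (c : ℕ) : Finset (Finset (Fin n)) :=
  {F | F ∈ Δ ∧ #F = c}

def topSeg (n k : ℕ) : Finset (Fin n) :=
  {z | n - k ≤ (z : ℕ)}

section ShiftedComplex

variable {n : ℕ} {Δ : Set (Finset (Fin n))}

theorem mem_facesOfCard {c : ℕ} {F : Finset (Fin n)} :
    F ∈ facesOfCard Δ c ↔ F ∈ Δ ∧ #F = c := by
  simp [facesOfCard]

theorem fvec_eq_card_facesOfCard (Δ : Set (Finset (Fin n))) (c : ℕ) :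
    fvec Δ c = #(facesOfCard Δ c) := by
  rw [fvec, ← Set.ncard_coe_finset]
  congr 1
  ext F
  simp [mem_facesOfCard]

theorem mem_sigmaSeg {F : Finset (Fin n)} {k : Fin n} :
    k ∈ sigmaSeg F ↔ ∀ l, k ≤ l → l ∈ F := by
  simp [sigmaSeg]

theorem sigmaSeg_subset (F : Finset (Fin n)) : sigmaSeg F ⊆ F :=
  fun k hk => mem_sigmaSeg.1 hk k le_rfl

theorem card_sigmaSeg_le (F : Finset (Fin n)) : #(sigmaSeg F) ≤ #F :=
  card_le_card (sigmaSeg_subset F)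

theorem mem_topSeg {k : ℕ} {z : Fin n} : z ∈ topSeg n k ↔ n - k ≤ z := by
  simp [topSeg]

theorem le_card_sigmaSeg_iff {F : Finset (Fin n)} {k : ℕ} (hk : k ≤ n) :
    k ≤ #(sigmaSeg F) ↔ topSeg n k ⊆ F := by
  constructor
  · intro hkσ z hz
    refine sigmaSeg_subset F ?_
    by_contra hzσ
    have hsub : sigmaSeg F ⊆ Ioi z := fun w hw => mem_Ioi.2 <| lt_of_not_ge fun hwz =>
      hzσ (mem_sigmaSeg.2 fun l hl => mem_sigmaSeg.1 hw l (hwz.trans hl))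
    have := card_le_card hsub
    rw [Fin.card_Ioi] at this
    have := mem_topSeg.1 hz
    omega
  · intro htop
    rcases Nat.eq_zero_or_pos k with rfl | hk0
    · exact Nat.zero_le _
    · have hsub : Ici (⟨n - k, by omega⟩ : Fin n) ⊆ sigmaSeg F := fun w hw =>
        mem_sigmaSeg.2 fun l hl =>
          htop (mem_topSeg.2 (Fin.le_def.1 ((Finset.mem_Ici.1 hw).trans hl)))
      have := card_le_card hsub
      rw [Fin.card_Ici] at this
      simp only at this
      omega

theorem topSeg_succ {k : ℕ} (hk : k < n) :
    topSeg n (k + 1) = insert ⟨n - 1 - k, by omega⟩ (topSeg n k) := by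
  ext z
  simp only [mem_topSeg, mem_insert, Fin.ext_iff]
  omega

theorem notMem_topSeg {k : ℕ} (hk : k < n) :
    (⟨n - 1 - k, by omega⟩ : Fin n) ∉ topSeg n k := by
  rw [mem_topSeg]
  simp only
  omega

theorem card_sigmaSeg_eq_iff {F : Finset (Fin n)} {k : ℕ} (hk : k < n) :
    #(sigmaSeg F) = k ↔ topSeg n k ⊆ F ∧ (⟨n - 1 - k, by omega⟩ : Fin n) ∉ F := by
  rw [le_antisymm_iff, ← not_lt, Nat.lt_iff_add_one_le, le_card_sigmaSeg_iff hk.le,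
    le_card_sigmaSeg_iff hk, topSeg_succ hk, insert_subset_iff]
  tauto

theorem exists_insert_mem_of_not_isFacet (hC : IsCplx Δ) {F : Finset (Fin n)} (hF : F ∈ Δ)
    (hnf : ¬IsFacet Δ F) : ∃ x ∉ F, insert x F ∈ Δ := by
  obtain ⟨H, hH, hFH, hne⟩ : ∃ H ∈ Δ, F ⊆ H ∧ F ≠ H := by
    by_contra! h
    exact hnf ⟨hF, h⟩
  obtain ⟨x, hxH, hxF⟩ := not_subset.1 fun hHF => hne (hFH.antisymm hHF)
  exact ⟨x, hxF, hC H hH _ (insert_subset hxH hFH)⟩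

theorem insert_mem_of_not_isFacet (hC : IsCplx Δ) (hS : ShiftedCplx Δ) {F : Finset (Fin n)}
    (hF : F ∈ Δ) (hnf : ¬IsFacet Δ F) {e : Fin n} (he : e ∉ F) (hup : ∀ z, e < z → z ∈ F) :
    insert e F ∈ Δ := by
  obtain ⟨x, hxF, hx⟩ := exists_insert_mem_of_not_isFacet hC hF hnf
  rcases lt_trichotomy x e with hxe | rfl | hex
  · have := hS _ hx x e hxe (mem_insert_self x F) (by simp [he, hxe.ne'])
    rwa [erase_insert hxF] at this
  · exact hx
  · exact absurd (hup x hex) hxF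

theorem exists_superset_sdiff_subset_sigmaSeg (hS : ShiftedCplx Δ) {G F₀ : Finset (Fin n)}
    (hF₀ : F₀ ∈ Δ) (hG : G ⊆ F₀) : ∃ F ∈ Δ, G ⊆ F ∧ #F = #F₀ ∧ F \ G ⊆ sigmaSeg F := by
  classical
  -- a candidate with maximal vertex sum cannot be shifted any further
  obtain ⟨F, hF, hmax⟩ := exists_max_image ({F | F ∈ Δ ∧ G ⊆ F ∧ #F = #F₀} : Finset _)
    (fun F => ∑ x ∈ F, (x : ℕ)) ⟨F₀, by simp [hF₀, hG]⟩
  simp only [mem_filter, mem_univ, true_and] at hF hmax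
  obtain ⟨hFΔ, hGF, hcard⟩ := hF
  refine ⟨F, hFΔ, hGF, hcard, fun x hx => ?_⟩
  obtain ⟨hxF, hxG⟩ := mem_sdiff.1 hx
  rw [mem_sigmaSeg]
  by_contra! ⟨l, hxl, hlF⟩
  have hxl : x < l := lt_of_le_of_ne hxl (by rintro rfl; exact hlF hxF)
  have hl : l ∉ F.erase x := fun h => hlF (mem_of_mem_erase h)
  have hshift := hmax (insert l (F.erase x)) ⟨hS F hFΔ x l hxl hxF hlF,
    fun g hg => mem_insert_of_mem (mem_erase.2 ⟨ne_of_mem_of_not_mem hg hxG, hGF hg⟩),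
    by rw [card_insert_of_notMem hl, card_erase_of_mem hxF, ← hcard]
       exact Nat.sub_add_cancel (card_pos.2 ⟨x, hxF⟩)⟩
  rw [sum_insert hl, ← add_sum_erase F _ hxF] at hshift
  have : (x : ℕ) < l := hxl
  omega

theorem mem_of_le_of_sdiff_eq {F₁ S₁ F₂ S₂ : Finset (Fin n)} (h₁ : S₁ ⊆ sigmaSeg F₁)
    (heq : F₁ \ S₁ = F₂ \ S₂) {a b : Fin n} (ha : a ∈ S₁) (hb : b ∈ S₂)
    (hab : a ≤ b) : b ∈ S₁ := by
  by_contra hbS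
  have : b ∈ F₂ \ S₂ := heq ▸ mem_sdiff.2 ⟨mem_sigmaSeg.1 (h₁ ha) b hab, hbS⟩
  exact (mem_sdiff.1 this).2 hb

theorem eq_of_sdiff_eq_of_subset_sigmaSeg {F₁ S₁ F₂ S₂ : Finset (Fin n)}
    (h₁ : S₁ ⊆ sigmaSeg F₁) (h₂ : S₂ ⊆ sigmaSeg F₂) (hcard : #S₁ = #S₂)
    (heq : F₁ \ S₁ = F₂ \ S₂) : S₁ = S₂ ∧ F₁ = F₂ := by
  have hS : S₁ = S₂ := eq_of_card_eq_of_forall_le_mem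
    (fun _ ha _ hb => mem_of_le_of_sdiff_eq h₁ heq ha hb)
    (fun _ ha _ hb => mem_of_le_of_sdiff_eq h₂ heq.symm ha hb)
    hcard
  refine ⟨hS, ?_⟩
  rw [← sdiff_union_of_subset (h₁.trans (sigmaSeg_subset F₁)),
    ← sdiff_union_of_subset (h₂.trans (sigmaSeg_subset F₂)), heq, hS]

theorem card_facesOfCard_pureSkel (hS : ShiftedCplx Δ) {c i : ℕ} (hi : i ≤ c) :
    #(facesOfCard (pureSkel Δ c) i)
      = ∑ F ∈ facesOfCard Δ c, (#(sigmaSeg F)).choose (c - i) := by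
  classical
  simp_rw [← card_powersetCard, ← card_sigma]
  symm
  refine card_bij (fun p _ => p.1 \ p.2) ?_ ?_ ?_
  · rintro ⟨F, S⟩ hp
    simp only [mem_sigma, mem_facesOfCard, mem_powersetCard] at hp ⊢
    obtain ⟨⟨hF, hcF⟩, hSσ, hcS⟩ := hp
    refine ⟨⟨F, hF, hcF, sdiff_subset⟩, ?_⟩
    rw [card_sdiff_of_subset (hSσ.trans (sigmaSeg_subset F))]
    omega
  · rintro ⟨F₁, S₁⟩ hp₁ ⟨F₂, S₂⟩ hp₂ heq
    simp only [mem_sigma, mem_facesOfCard, mem_powersetCard] at hp₁ hp₂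
    obtain ⟨rfl, rfl⟩ := eq_of_sdiff_eq_of_subset_sigmaSeg hp₁.2.1 hp₂.2.1
      (hp₁.2.2.trans hp₂.2.2.symm) heq
    rfl
  · intro G hG
    obtain ⟨⟨F₀, hF₀, hcF₀, hGF₀⟩, hcG⟩ := mem_facesOfCard.1 hG
    obtain ⟨F, hF, hGF, hcF, hsub⟩ := exists_superset_sdiff_subset_sigmaSeg hS hF₀ hGF₀
    refine ⟨⟨F, F \ G⟩, ?_, Finset.sdiff_sdiff_eq_self hGF⟩
    simp only [mem_sigma, mem_facesOfCard, mem_powersetCard]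
    exact ⟨⟨hF, hcF.trans hcF₀⟩, hsub, by rw [card_sdiff_of_subset hGF]; omega⟩

theorem htilde_eq_card (hS : ShiftedCplx Δ) {c j : ℕ} (hj : j ≤ c) :
    htilde Δ c j = #{F ∈ facesOfCard Δ c | #(sigmaSeg F) = c - j} := by
  calc htilde Δ c j
      = ∑ i ∈ range (j + 1), ∑ F ∈ facesOfCard Δ c,
          (-1 : ℤ) ^ (j - i) * ((c - i).choose (j - i) : ℤ)
            * ((#(sigmaSeg F)).choose (c - i) : ℤ) := by
        rw [htilde, hvec]
        refine sum_congr rfl fun i hi => ?_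
        rw [fvec_eq_card_facesOfCard, card_facesOfCard_pureSkel hS (by simp at hi; omega)]
        push_cast
        rw [mul_sum]
    _ = ∑ F ∈ facesOfCard Δ c, if #(sigmaSeg F) = c - j then (1 : ℤ) else 0 := by
        rw [sum_comm]
        refine sum_congr rfl fun F hF => sum_alternating_choose_mul_choose hj ?_
        exact (mem_facesOfCard.1 hF).2 ▸ card_sigmaSeg_le F
    _ = #{F ∈ facesOfCard Δ c | #(sigmaSeg F) = c - j} := by
        rw [sum_boole]

theorem sum_htilde_succ_eq_card (hS : ShiftedCplx Δ) {i j : ℕ} (hj : j ≤ i) :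
    ∑ ℓ ∈ range (j + 1), htilde Δ (i + 1) ℓ
      = #{G ∈ facesOfCard Δ (i + 1) | i - j + 1 ≤ #(sigmaSeg G)} := by
  rw [sum_congr rfl fun ℓ hℓ => htilde_eq_card hS (by simp at hℓ; omega), ← Nat.cast_sum,
    sum_range_card_filter_eq_sub (by omega)
      fun G hG => (mem_facesOfCard.1 hG).2 ▸ card_sigmaSeg_le G]
  rw [show i + 1 - j = i - j + 1 by omega]

open Classical in
theorem card_not_isFacet_eq_card_of_lt (hC : IsCplx Δ) (hS : ShiftedCplx Δ) {i k : ℕ}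
    (hk : k < n) :
    #{F ∈ {F ∈ facesOfCard Δ i | #(sigmaSeg F) = k} | ¬IsFacet Δ F}
      = #{G ∈ facesOfCard Δ (i + 1) | k + 1 ≤ #(sigmaSeg G)} := by
  set e : Fin n := ⟨n - 1 - k, by omega⟩
  have hexact {F : Finset (Fin n)} : #(sigmaSeg F) = k ↔ topSeg n k ⊆ F ∧ e ∉ F :=
    card_sigmaSeg_eq_iff hk
  have hsucc {F : Finset (Fin n)} : k + 1 ≤ #(sigmaSeg F) ↔ e ∈ F ∧ topSeg n k ⊆ F := by
    rw [le_card_sigmaSeg_iff hk, topSeg_succ hk, insert_subset_iff]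
  symm
  refine card_nbij' (·.erase e) (insert e ·) ?_ ?_ ?_ ?_
  · intro G hG
    simp only [mem_coe, mem_filter, mem_facesOfCard] at hG ⊢
    obtain ⟨⟨hGΔ, hcard⟩, heG, htop⟩ := hG.imp_right hsucc.1
    refine ⟨⟨⟨hC G hGΔ _ (erase_subset e G), by rw [card_erase_of_mem heG, hcard]; rfl⟩,
      hexact.2 ⟨subset_erase.2 ⟨htop, notMem_topSeg hk⟩, notMem_erase e G⟩⟩, fun hfacet => ?_⟩
    exact notMem_erase e G (by rwa [hfacet.2 G hGΔ (erase_subset e G)])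
  · intro F hF
    simp only [mem_coe, mem_filter, mem_facesOfCard] at hF ⊢
    obtain ⟨⟨⟨hFΔ, hcard⟩, hσ⟩, hnf⟩ := hF
    obtain ⟨htop, heF⟩ := hexact.1 hσ
    have hup : ∀ z, e < z → z ∈ F := fun z hz =>
      htop (mem_topSeg.2 (by simp only [e, Fin.lt_def] at hz; omega))
    refine ⟨⟨insert_mem_of_not_isFacet hC hS hFΔ hnf heF hup, ?_⟩,
      hsucc.2 ⟨mem_insert_self e F, htop.trans (subset_insert e F)⟩⟩
    rw [card_insert_of_notMem heF, hcard]
  · intro G hG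
    exact insert_erase (hsucc.1 (mem_filter.1 hG).2).1
  · intro F hF
    exact erase_insert (hexact.1 (mem_filter.1 (mem_filter.1 hF).1).2).2

open Classical in
theorem card_not_isFacet_eq_card (hC : IsCplx Δ) (hS : ShiftedCplx Δ) (i k : ℕ) :
    #{F ∈ {F ∈ facesOfCard Δ i | #(sigmaSeg F) = k} | ¬IsFacet Δ F}
      = #{G ∈ facesOfCard Δ (i + 1) | k + 1 ≤ #(sigmaSeg G)} := by
  rcases lt_or_ge k n with hk | hk
  · exact card_not_isFacet_eq_card_of_lt hC hS hk
  rw [card_eq_zero.2 (filter_eq_empty_iff.2 ?_), card_eq_zero.2 (filter_eq_empty_iff.2 ?_)]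
  · intro G _ hG
    have := (card_sigmaSeg_le G).trans (card_le_univ G)
    simp only [Fintype.card_fin] at this
    omega
  · intro F hF hnf
    obtain ⟨⟨hFΔ, -⟩, hσ⟩ := (mem_filter.1 hF).imp_left mem_facesOfCard.1
    obtain ⟨x, hx, -⟩ := exists_insert_mem_of_not_isFacet hC hFΔ hnf
    have := (card_sigmaSeg_le F).trans_lt (card_lt_univ_of_notMem hx)
    simp only [Fintype.card_fin] at this
    omega

end ShiftedComplex

theorem htri_counts_facets_general (n d : ℕ) (Δ : Set (Finset (Fin n)))
    (hC : IsCplx Δ) (hS : ShiftedCplx Δ) :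
    ∀ i j : ℕ, j ≤ i → i ≤ d →
      htri Δ i j =
        ({F : Finset (Fin n) | IsFacet Δ F ∧ F.card = i ∧ (sigmaSeg F).card = i - j}.ncard : ℤ) := by
  intro i j hji _
  classical
  have hfacets : {F : Finset (Fin n) | IsFacet Δ F ∧ F.card = i ∧ (sigmaSeg F).card = i - j}
      = ↑({F ∈ {F ∈ facesOfCard Δ i | #(sigmaSeg F) = i - j} | IsFacet Δ F}) := by
    ext F
    simp only [Set.mem_ofPred_eq, coe_filter, mem_filter, mem_facesOfCard]
    exact ⟨fun ⟨hF, hc, hσ⟩ => ⟨⟨⟨hF.1, hc⟩, hσ⟩, hF⟩, fun ⟨⟨⟨_, hc⟩, hσ⟩, hF⟩ => ⟨hF, hc, hσ⟩⟩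
  have hsplit := card_filter_add_card_filter_not
    (s := {F ∈ facesOfCard Δ i | #(sigmaSeg F) = i - j}) (fun F => IsFacet Δ F)
  rw [hfacets, Set.ncard_coe_finset, htri, htilde_eq_card hS hji,
    sum_htilde_succ_eq_card hS hji, ← card_not_isFacet_eq_card hC hS]
  omega

/-- (Equation (2)) For a shifted complex `Δ` of dimension `d-1` on `[n]`,
the `h`-triangle entry `h_{i,j}` counts the facets `F` with `|F| = i` and `|σ(F)| = i - j`. -/
theorem htri_counts_facets (n d : ℕ) (Δ : Set (Finset (Fin n)))
    (hC : IsCplx Δ) (hS : ShiftedCplx Δ)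
    (hdim : ∀ F ∈ Δ, F.card ≤ d) (hdim' : ∃ F ∈ Δ, F.card = d) :
    ∀ i j : ℕ, j ≤ i → i ≤ d →
      htri Δ i j =
        ({F : Finset (Fin n) | IsFacet Δ F ∧ F.card = i ∧ (sigmaSeg F).card = i - j}.ncard : ℤ) :=
  htri_counts_facets_general n d Δ hC hS
end
end
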